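/- arXiv:1902.05798 — 5 statements merged into one kernel-verified Lean document; each statement's English description precedes it below -/
import Mathlib

section
/- Let α₁ ∈ (0,1) be an irrational real number, and define recursively α_{n+1} = 1 − ⌊1/α_n⌋·α_n for n = 1, 2, …, where ⌊·⌋ is the floor function. Then every α_n is a well-defined irrational number in (0,1), the sequence (α_n) is strictly decreasing, and lim_{n→∞} α_n = 0. -/
/-!
Writing `k = ⌊1/α⌋`, the map `α ↦ 1 - kα` equals `α · fract (1/α)`, so it keeps an irrational
`α ∈ (0,1)` irrational and positive while decreasing it. Moreover `1/α < k + 1` gives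
`1 - kα < 1/(k+1)`, and `α ≤ 1/(m+1)` forces `k ≥ m+1`; by induction `α_n ≤ 1/(n+1)`.
-/

open Set

section FloorInvStep

variable {α : ℝ}

lemma one_le_floor_one_div (h0 : 0 < α) (h1 : α ≤ 1) : 1 ≤ ⌊1 / α⌋ :=
  Int.le_floor.mpr (by simpa using one_le_one_div h0 h1)

lemma one_lt_floor_one_div_add_one_mul (h0 : 0 < α) : 1 < ((⌊1 / α⌋ : ℝ) + 1) * α :=
  (div_lt_iff₀ h0).mp (Int.lt_floor_add_one _)

lemma Irrational.one_sub_floor_one_div_mul (hα : Irrational α) (hk : ⌊1 / α⌋ ≠ 0) :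
    Irrational (1 - (⌊1 / α⌋ : ℝ) * α) := by
  simpa using (hα.intCast_mul hk).ratCast_sub 1

lemma Irrational.one_sub_floor_one_div_mul_pos (hα : Irrational α) (h0 : 0 < α) :
    0 < 1 - (⌊1 / α⌋ : ℝ) * α := by
  have hlt : (⌊1 / α⌋ : ℝ) < 1 / α :=
    (Int.floor_le _).lt_of_ne ((one_div α ▸ hα.inv).ne_int _).symm
  have := (lt_div_iff₀ h0).mp hlt
  linarith

lemma one_sub_floor_one_div_mul_lt_self (h0 : 0 < α) : 1 - (⌊1 / α⌋ : ℝ) * α < α := by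
  linarith [one_lt_floor_one_div_add_one_mul h0]

lemma one_sub_floor_one_div_mul_lt_one_div (h0 : 0 < α) (h1 : α ≤ 1) :
    1 - (⌊1 / α⌋ : ℝ) * α < 1 / ((⌊1 / α⌋ : ℝ) + 1) := by
  have hk : (1 : ℝ) ≤ ⌊1 / α⌋ := by exact_mod_cast one_le_floor_one_div h0 h1
  rw [lt_div_iff₀ (by linarith)]
  nlinarith [one_lt_floor_one_div_add_one_mul h0]

lemma one_sub_floor_one_div_mul_le_one_div_succ {m : ℕ} (h0 : 0 < α)
    (hm : α ≤ 1 / ((m : ℝ) + 1)) :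
    1 - (⌊1 / α⌋ : ℝ) * α ≤ 1 / ((m : ℝ) + 2) := by
  have h1 : α ≤ 1 := hm.trans (div_le_one_of_le₀ (by simp) (by positivity))
  have hk : (m : ℝ) + 1 ≤ ⌊1 / α⌋ := by
    have : (((m + 1 : ℕ) : ℤ) : ℝ) ≤ 1 / α := by
      push_cast
      exact (le_one_div h0 (by positivity)).mp hm
    exact_mod_cast Int.le_floor.mpr this
  calc 1 - (⌊1 / α⌋ : ℝ) * α ≤ 1 / ((⌊1 / α⌋ : ℝ) + 1) :=
        (one_sub_floor_one_div_mul_lt_one_div h0 h1).le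
    _ ≤ 1 / ((m : ℝ) + 2) := one_div_le_one_div_of_le (by positivity) (by linarith)

end FloorInvStep

/-- Starting from an irrational `a 0 ∈ (0,1)` and iterating
`a (n+1) = 1 - ⌊1 / a n⌋ * a n`, every term is a well-defined irrational number in `(0,1)`,
the sequence is strictly decreasing, and it tends to `0`. -/
theorem stmt0 (a : ℕ → ℝ)
    (h0 : a 0 ∈ Set.Ioo (0 : ℝ) 1) (hirr : Irrational (a 0))
    (hrec : ∀ n : ℕ, a (n + 1) = 1 - (⌊1 / a n⌋ : ℝ) * a n) :
    (∀ n : ℕ, Irrational (a n) ∧ a n ∈ Set.Ioo (0 : ℝ) 1) ∧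
    (∀ n : ℕ, a (n + 1) < a n) ∧
    Filter.Tendsto a Filter.atTop (nhds 0) := by
  have succ_lt_of_pos : ∀ n, 0 < a n → a (n + 1) < a n := fun n hpos =>
    hrec n ▸ one_sub_floor_one_div_mul_lt_self hpos
  have irrational_mem : ∀ n, Irrational (a n) ∧ a n ∈ Ioo (0 : ℝ) 1 := by
    intro n
    induction n with
    | zero => exact ⟨hirr, h0⟩
    | succ n ih =>
      obtain ⟨hi, hpos, hlt⟩ := ih
      have hk : ⌊1 / a n⌋ ≠ 0 := (zero_lt_one.trans_le (one_le_floor_one_div hpos hlt.le)).ne'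
      exact ⟨hrec n ▸ hi.one_sub_floor_one_div_mul hk,
        hrec n ▸ hi.one_sub_floor_one_div_mul_pos hpos, (succ_lt_of_pos n hpos).trans hlt⟩
  have bound : ∀ n : ℕ, a n ≤ 1 / ((n : ℝ) + 1) := by
    intro n
    induction n with
    | zero => simpa using h0.2.le
    | succ n ih =>
      rw [hrec n, Nat.cast_succ, add_assoc, one_add_one_eq_two]
      exact one_sub_floor_one_div_mul_le_one_div_succ (irrational_mem n).2.1 ih
  refine ⟨irrational_mem, fun n => succ_lt_of_pos n (irrational_mem n).2.1, ?_⟩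
  exact squeeze_zero (fun n => (irrational_mem n).2.1.le) bound tendsto_one_div_add_atTop_nhds_zero_nat
end

section
/- Let Ω, λ, u be as in the context, let x₀ ∈ Ω and h > 0 be such that the closed disk {x ∈ ℝ² : |x − x₀| ≤ h} is contained in Ω. Let α ∈ (0,1) be irrational, let θ⁻, θ⁺ be angles with θ⁺ − θ⁻ = 2πα, and set Γ_h^± = {x₀ + r(cos θ^±, sin θ^±) : 0 ≤ r ≤ h}. If u = 0 on both Γ_h^+ and Γ_h^− (i.e., both segments are nodal lines of u), then u has infinite vanishing order at x₀: every partial derivative of u of every order vanishes at x₀ (equivalently, u ≡ 0 on a neighborhood of x₀). -/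
/-- First partial derivative of `u : ℝ × ℝ → ℂ` in the `x₁` direction. -/
noncomputable def pd1 (u : ℝ × ℝ → ℂ) : ℝ × ℝ → ℂ := fun x => fderiv ℝ u x (1, 0)

/-- First partial derivative of `u : ℝ × ℝ → ℂ` in the `x₂` direction. -/
noncomputable def pd2 (u : ℝ × ℝ → ℂ) : ℝ × ℝ → ℂ := fun x => fderiv ℝ u x (0, 1)

/-!
Write `∂ = (∂₁ - i∂₂)/2`, `∂̄ = (∂₁ + i∂₂)/2` and `c j k = (∂ʲ ∂̄ᵏ u)(x₀)`. Since `Δ = 4∂∂̄`, the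
eigenvalue equation gives `c (j+1) (k+1) = -(λ/4) c j k`, so by induction on the order `n = j + k`
only `c n 0` and `c 0 n` can be nonzero. The directional derivative along `e^{iθ}` is
`e^{iθ} ∂ + e^{-iθ} ∂̄`, and its `n`-th power at `x₀` vanishes along a nodal ray, because `u`
restricted to the line is analytic and vanishes on a segment. At order `n` the two rays give
`e^{inθ±} c n 0 + e^{-inθ±} c 0 n = 0`; this system is nondegenerate because `e^{2in(θ₊-θ₋)} ≠ 1`
when `α` is irrational. So every `c j k` vanishes, every derivative of `u` at `x₀` along every
direction vanishes, and `u` vanishes near `x₀` by its Taylor expansion.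
-/

open Filter Topology
open scoped ContDiff

section IteratedFDeriv

variable {𝕜 : Type*} [NontriviallyNormedField 𝕜] {E F : Type*} [NormedAddCommGroup E]
  [NormedSpace 𝕜 E] [NormedAddCommGroup F] [NormedSpace 𝕜 F]

theorem iteratedFDeriv_succ_apply_const {f : E → F} {x : E} {n : ℕ}
    (hf : DifferentiableAt 𝕜 (iteratedFDeriv 𝕜 n f) x) (v : E) :
    iteratedFDeriv 𝕜 (n + 1) f x (fun _ => v) =
      fderiv 𝕜 (fun y => iteratedFDeriv 𝕜 n f y (fun _ => v)) x v := by
  rw [iteratedFDeriv_succ_apply_left, fderiv_continuousMultilinear_apply_const_apply hf]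
  rfl

end IteratedFDeriv

section Real

variable {E F : Type*} [NormedAddCommGroup E] [NormedSpace ℝ E] [NormedAddCommGroup F]
  [NormedSpace ℝ F]

theorem iteratedDeriv_comp_add_smul {Ω : Set E} (hΩ : IsOpen Ω) {f : E → F}
    (hf : ContDiffOn ℝ ∞ f Ω) (x v : E) (n : ℕ) {t : ℝ} (ht : x + t • v ∈ Ω) :
    iteratedDeriv n (fun s : ℝ => f (x + s • v)) t =
      iteratedFDeriv ℝ n f (x + t • v) (fun _ => v) := by
  induction n generalizing t with
  | zero => simp
  | succ n ih =>
    have hopen : IsOpen {s : ℝ | x + s • v ∈ Ω} := hΩ.preimage (by fun_prop)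
    have hline : HasDerivAt (fun s : ℝ => x + s • v) v t := by
      simpa using ((hasDerivAt_id t).smul_const v).const_add x
    have hdiff : DifferentiableAt ℝ (iteratedFDeriv ℝ n f) (x + t • v) :=
      (hf.contDiffAt (hΩ.mem_nhds ht)).differentiableAt_iteratedFDeriv
        (mod_cast ENat.natCast_lt_top n)
    rw [iteratedDeriv_succ, Filter.EventuallyEq.deriv_eq
      (eventually_of_mem (hopen.mem_nhds ht) fun s hs => ih hs),
      iteratedFDeriv_succ_apply_const hdiff]
    exact ((hdiff.continuousMultilinear_apply_const _).hasFDerivAt.comp_hasDerivAt t hline).deriv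

theorem iteratedFDeriv_apply_const_eq_zero_of_segment {Ω : Set E} (hΩ : IsOpen Ω) {f : E → F}
    (hf : AnalyticOnNhd ℝ f Ω) {x : E} (hx : x ∈ Ω) (v : E) {h : ℝ} (hh : 0 < h)
    (hzero : ∀ t ∈ Set.Icc 0 h, f (x + t • v) = 0) (n : ℕ) :
    iteratedFDeriv ℝ n f x (fun _ => v) = 0 := by
  have hline : AnalyticAt ℝ (fun s : ℝ => f (x + s • v)) 0 := by
    refine AnalyticAt.comp (by simpa using hf x hx) ?_
    exact analyticAt_const.add (analyticAt_id.smul analyticAt_const)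
  have hright : ∀ᶠ s in 𝓝[>] (0 : ℝ), f (x + s • v) = 0 := by
    filter_upwards [Ioo_mem_nhdsGT hh] with s hs using hzero s ⟨hs.1.le, hs.2.le⟩
  have hev : (fun s : ℝ => f (x + s • v)) =ᶠ[𝓝 0] fun _ => 0 :=
    hline.frequently_zero_iff_eventually_zero.mp
      (hright.frequently.filter_mono (nhdsWithin_mono _ fun s hs => ne_of_gt hs))
  have hderiv := iteratedDeriv_comp_add_smul hΩ (hf.contDiffOn hΩ.uniqueDiffOn) x v n
    (t := 0) (by simpa)
  simp only [zero_smul, add_zero] at hderiv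
  rw [← hderiv, hev.iteratedDeriv_eq n]
  simp

theorem eventuallyEq_zero_of_iteratedFDeriv_apply_const_eq_zero [CompleteSpace F] {f : E → F}
    {x : E} (hf : AnalyticAt ℝ f x) (h : ∀ n v, iteratedFDeriv ℝ n f x (fun _ => v) = 0) :
    f =ᶠ[𝓝 x] 0 := by
  obtain ⟨p, r, hp⟩ := hf
  have hball : ∀ y ∈ Metric.eball (0 : E) r, f (x + y) = 0 := fun y hy => by
    have hs := hp.hasSum_iteratedFDeriv hy
    simp only [h, smul_zero] at hs
    exact hs.unique hasSum_zero
  filter_upwards [Metric.eball_mem_nhds x hp.r_pos] with y hy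
  simpa using hball (y - x) (by simpa [edist_eq_enorm_sub] using hy)

end Real

section SmoothOn

open Set

variable {E : Type*} [NormedAddCommGroup E] [NormedSpace ℝ E] (Ω : TopologicalSpace.Opens E)

def smoothOn : Submodule ℂ (E → ℂ) where
  carrier := {f | ContDiffOn ℝ ∞ f Ω}
  add_mem' hf hg := hf.add hg
  zero_mem' := contDiffOn_const
  smul_mem' c _ hf := hf.const_smul c

variable {Ω}

theorem contDiffOn_fderiv_apply {f : E → ℂ} (hf : f ∈ smoothOn Ω) (v : E) :
    ContDiffOn ℝ ∞ (fun x => fderiv ℝ f x v) Ω :=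
  (ContDiffOn.fderiv_of_isOpen hf Ω.isOpen (by simp)).clm_apply contDiffOn_const

theorem differentiableAt_of_mem_smoothOn {f : E → ℂ} (hf : f ∈ smoothOn Ω) {x : E}
    (hx : x ∈ Ω) : DifferentiableAt ℝ f x :=
  (ContDiffOn.contDiffAt hf (Ω.isOpen.mem_nhds hx)).differentiableAt (by simp)

variable (Ω)

/-- Cutting the derivative off outside `Ω` makes it a linear operator on `smoothOn Ω`, so that
Schwarz's theorem becomes commutativity of operators and the binomial theorem applies. -/
noncomputable def partialDeriv (v : E) : Module.End ℂ (smoothOn Ω) where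
  toFun f := ⟨(Ω : Set E).indicator fun x => fderiv ℝ f x v,
    (contDiffOn_fderiv_apply f.2 v).congr fun _ hx => indicator_of_mem hx _⟩
  map_add' f g := by
    ext x
    by_cases hx : x ∈ Ω
    · simp [indicator_of_mem hx, fderiv_add (differentiableAt_of_mem_smoothOn f.2 hx)
        (differentiableAt_of_mem_smoothOn g.2 hx)]
    · simp [indicator_of_notMem hx]
  map_smul' c f := by
    ext x
    by_cases hx : x ∈ Ω
    · simp [indicator_of_mem hx, fderiv_const_smul (differentiableAt_of_mem_smoothOn f.2 hx)]
    · simp [indicator_of_notMem hx]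

variable {Ω}

theorem partialDeriv_apply_of_mem (v : E) (f : smoothOn Ω) {x : E} (hx : x ∈ Ω) :
    (partialDeriv Ω v f : E → ℂ) x = fderiv ℝ f x v :=
  indicator_of_mem hx (fun x => fderiv ℝ (f : E → ℂ) x v)

theorem partialDeriv_apply_of_notMem (v : E) (f : smoothOn Ω) {x : E} (hx : x ∉ Ω) :
    (partialDeriv Ω v f : E → ℂ) x = 0 :=
  indicator_of_notMem hx (fun x => fderiv ℝ (f : E → ℂ) x v)

theorem partialDeriv_eqOn {f : smoothOn Ω} {g : E → ℂ} (hfg : EqOn f g Ω) (v : E) :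
    EqOn (partialDeriv Ω v f) (fun x => fderiv ℝ g x v) Ω := fun x hx => by
  have hfg' : (f : E → ℂ) =ᶠ[𝓝 x] g := eventually_of_mem (Ω.isOpen.mem_nhds hx) hfg
  rw [partialDeriv_apply_of_mem v f hx, hfg'.fderiv_eq]

theorem partialDeriv_partialDeriv_apply_of_mem (v w : E) (f : smoothOn Ω) {x : E}
    (hx : x ∈ Ω) :
    (partialDeriv Ω v (partialDeriv Ω w f) : E → ℂ) x = fderiv ℝ (fderiv ℝ f) x v w := by
  have hdf : DifferentiableAt ℝ (fderiv ℝ (f : E → ℂ)) x :=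
    ((ContDiffOn.fderiv_of_isOpen (m := ∞) f.2 Ω.isOpen (by simp)).contDiffAt
      (Ω.isOpen.mem_nhds hx)).differentiableAt (by simp)
  rw [partialDeriv_eqOn (partialDeriv_eqOn (g := f) (fun _ _ => rfl) w) v hx]
  beta_reduce
  rw [fderiv_clm_apply hdf (differentiableAt_const w)]
  simp

theorem commute_partialDeriv (v w : E) : Commute (partialDeriv Ω v) (partialDeriv Ω w) := by
  refine LinearMap.ext fun f => Subtype.ext <| funext fun x => ?_
  by_cases hx : x ∈ Ω
  · have hsymm : IsSymmSndFDerivAt ℝ (f : E → ℂ) x :=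
      (ContDiffOn.contDiffAt f.2 (Ω.isOpen.mem_nhds hx)).isSymmSndFDerivAt
        (by simpa using ENat.LEInfty.out)
    simp only [Module.End.mul_apply]
    rw [partialDeriv_partialDeriv_apply_of_mem v w f hx,
      partialDeriv_partialDeriv_apply_of_mem w v f hx, hsymm v w]
  · simp only [Module.End.mul_apply, partialDeriv_apply_of_notMem _ _ hx]

theorem partialDeriv_pow_apply (v : E) (f : smoothOn Ω) (n : ℕ) {x : E} (hx : x ∈ Ω) :
    ((partialDeriv Ω v ^ n) f : E → ℂ) x = iteratedFDeriv ℝ n f x (fun _ => v) := by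
  induction n generalizing x with
  | zero => simp
  | succ n ih =>
    have hdiff : DifferentiableAt ℝ (iteratedFDeriv ℝ n (f : E → ℂ)) x :=
      (ContDiffOn.contDiffAt f.2 (Ω.isOpen.mem_nhds hx)).differentiableAt_iteratedFDeriv
        (mod_cast ENat.natCast_lt_top n)
    rw [pow_succ', Module.End.mul_apply, partialDeriv_eqOn (fun y hy => ih hy) v hx,
      iteratedFDeriv_succ_apply_const hdiff]

theorem indicator_mem_smoothOn {f : E → ℂ} (hf : f ∈ smoothOn Ω) :
    (Ω : Set E).indicator f ∈ smoothOn Ω :=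
  ContDiffOn.congr hf fun _ hx => indicator_of_mem hx f

end SmoothOn

section Wirtinger

open Complex Finset.HasAntidiagonal

theorem Commute.smul_add_smul_pow {R A : Type*} [CommSemiring R] [Semiring A] [Algebra R A]
    {x y : A} (h : Commute x y) (a b : R) (n : ℕ) :
    (a • x + b • y) ^ n =
      ∑ p ∈ antidiagonal n, (n.choose p.1 * a ^ p.1 * b ^ p.2 : R) • (x ^ p.1 * y ^ p.2) := by
  rw [((h.smul_left a).smul_right b).add_pow']
  refine Finset.sum_congr rfl fun p _ => ?_
  rw [smul_pow, smul_pow, smul_mul_smul_comm, ← Nat.cast_smul_eq_nsmul R, smul_smul, mul_assoc]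

variable {M : Type*} [AddCommGroup M] [Module ℂ M] {A B : Module.End ℂ M}

theorem Commute.commute_wirtinger (h : Commute A B) :
    Commute ((2⁻¹ : ℂ) • (A - I • B)) ((2⁻¹ : ℂ) • (A + I • B)) := by
  refine ((Commute.sub_left ?_ ?_).smul_left _).smul_right _
  · exact (Commute.refl A).add_right (h.smul_right _)
  · exact (h.symm.add_right ((Commute.refl B).smul_right _)).smul_left _

theorem Commute.wirtinger_mul (h : Commute A B) :
    (2⁻¹ : ℂ) • (A - I • B) * ((2⁻¹ : ℂ) • (A + I • B)) = (4⁻¹ : ℂ) • (A * A + B * B) := by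
  rw [smul_mul_smul_comm, sub_mul, mul_add, mul_add, smul_mul_assoc, mul_smul_comm,
    smul_mul_assoc, mul_smul_comm, h.eq]
  match_scalars <;> ring_nf
  norm_num [I_sq]

theorem smul_add_smul_eq_wirtinger (a b : ℂ) :
    a • A + b • B =
      (a + b * I) • ((2⁻¹ : ℂ) • (A - I • B)) + (a - b * I) • ((2⁻¹ : ℂ) • (A + I • B)) := by
  match_scalars <;> ring_nf
  norm_num [I_sq]

end Wirtinger

section Plane

open Complex Finset.HasAntidiagonal

variable (Ω : TopologicalSpace.Opens (ℝ × ℝ))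

noncomputable def wirtinger : Module.End ℂ (smoothOn Ω) :=
  (2⁻¹ : ℂ) • (partialDeriv Ω (1, 0) - I • partialDeriv Ω (0, 1))

noncomputable def wirtingerBar : Module.End ℂ (smoothOn Ω) :=
  (2⁻¹ : ℂ) • (partialDeriv Ω (1, 0) + I • partialDeriv Ω (0, 1))

noncomputable def laplacianOn : Module.End ℂ (smoothOn Ω) :=
  partialDeriv Ω (1, 0) * partialDeriv Ω (1, 0) + partialDeriv Ω (0, 1) * partialDeriv Ω (0, 1)

variable {Ω}

theorem partialDeriv_prodMk (a b : ℝ) :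
    partialDeriv Ω (a, b) =
      (a : ℂ) • partialDeriv Ω (1, 0) + (b : ℂ) • partialDeriv Ω (0, 1) := by
  refine LinearMap.ext fun f => Subtype.ext <| funext fun x => ?_
  have hab : ((a, b) : ℝ × ℝ) = a • ((1, 0) : ℝ × ℝ) + b • ((0, 1) : ℝ × ℝ) := by simp
  by_cases hx : x ∈ Ω
  · simp only [LinearMap.add_apply, LinearMap.smul_apply, Submodule.coe_add,
      Submodule.coe_smul, Pi.add_apply, Pi.smul_apply, partialDeriv_apply_of_mem _ _ hx, hab,
      map_add, map_smul, Complex.real_smul, smul_eq_mul]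
  · simp only [LinearMap.add_apply, LinearMap.smul_apply, Submodule.coe_add,
      Submodule.coe_smul, Pi.add_apply, Pi.smul_apply, partialDeriv_apply_of_notMem _ _ hx,
      smul_zero, add_zero]

theorem partialDeriv_eq_wirtinger (a b : ℝ) :
    partialDeriv Ω (a, b) =
      ((a : ℂ) + b * I) • wirtinger Ω + ((a : ℂ) - b * I) • wirtingerBar Ω :=
  (partialDeriv_prodMk a b).trans (smul_add_smul_eq_wirtinger _ _)

theorem commute_wirtinger_wirtingerBar : Commute (wirtinger Ω) (wirtingerBar Ω) :=
  (commute_partialDeriv (1, 0) (0, 1)).commute_wirtinger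

theorem wirtinger_mul_wirtingerBar :
    wirtinger Ω * wirtingerBar Ω = (4⁻¹ : ℂ) • laplacianOn Ω :=
  (commute_partialDeriv (1, 0) (0, 1)).wirtinger_mul

theorem partialDeriv_pow_apply_eq_sum (a b : ℝ) (n : ℕ) (f : smoothOn Ω) (x : ℝ × ℝ) :
    ((partialDeriv Ω (a, b) ^ n) f : ℝ × ℝ → ℂ) x =
      ∑ p ∈ antidiagonal n, n.choose p.1 * ((a : ℂ) + b * I) ^ p.1 * ((a : ℂ) - b * I) ^ p.2 *
        ((wirtinger Ω ^ p.1 * wirtingerBar Ω ^ p.2) f : ℝ × ℝ → ℂ) x := by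
  rw [partialDeriv_eq_wirtinger, commute_wirtinger_wirtingerBar.smul_add_smul_pow]
  simp [LinearMap.sum_apply, Finset.sum_apply]

theorem laplacianOn_indicator {u : ℝ × ℝ → ℂ} (hu : u ∈ smoothOn Ω) {μ : ℂ}
    (heq : ∀ x ∈ Ω, pd1 (pd1 u) x + pd2 (pd2 u) x + μ * u x = 0) :
    laplacianOn Ω ⟨(Ω : Set (ℝ × ℝ)).indicator u, indicator_mem_smoothOn hu⟩ =
      -μ • ⟨(Ω : Set (ℝ × ℝ)).indicator u, indicator_mem_smoothOn hu⟩ := by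
  refine Subtype.ext <| funext fun x => ?_
  by_cases hx : x ∈ Ω
  · have hU : Set.EqOn ((Ω : Set (ℝ × ℝ)).indicator u) u Ω := fun y hy =>
      Set.indicator_of_mem hy u
    have h₁ := partialDeriv_eqOn
      (partialDeriv_eqOn (f := ⟨_, indicator_mem_smoothOn hu⟩) hU (1, 0)) (1, 0) hx
    have h₂ := partialDeriv_eqOn
      (partialDeriv_eqOn (f := ⟨_, indicator_mem_smoothOn hu⟩) hU (0, 1)) (0, 1) hx
    simp only [laplacianOn, LinearMap.add_apply, Module.End.mul_apply, Submodule.coe_add,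
      Submodule.coe_smul, Pi.add_apply, Pi.smul_apply, smul_eq_mul, Set.indicator_of_mem hx]
      at h₁ h₂ ⊢
    have hx' := heq x hx
    unfold pd1 pd2 at hx'
    rw [h₁, h₂]
    linear_combination hx'
  · simp only [laplacianOn, LinearMap.add_apply, Module.End.mul_apply, Submodule.coe_add,
      Submodule.coe_smul, Pi.add_apply, Pi.smul_apply, partialDeriv_apply_of_notMem _ _ hx,
      Set.indicator_of_notMem hx, smul_zero, add_zero]

theorem wirtinger_pow_succ_mul_wirtingerBar_pow_succ_apply {f : smoothOn Ω} {μ : ℂ}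
    (hf : laplacianOn Ω f = μ • f) (j k : ℕ) (x : ℝ × ℝ) :
    ((wirtinger Ω ^ (j + 1) * wirtingerBar Ω ^ (k + 1)) f : ℝ × ℝ → ℂ) x =
      4⁻¹ * μ * ((wirtinger Ω ^ j * wirtingerBar Ω ^ k) f : ℝ × ℝ → ℂ) x := by
  have hcomm : wirtinger Ω ^ (j + 1) * wirtingerBar Ω ^ (k + 1) =
      wirtinger Ω ^ j * wirtingerBar Ω ^ k * (wirtinger Ω * wirtingerBar Ω) := by
    rw [pow_succ, pow_succ, mul_assoc, ← mul_assoc (wirtinger Ω),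
      (commute_wirtinger_wirtingerBar.pow_right k).eq]
    simp only [mul_assoc]
  rw [hcomm, wirtinger_mul_wirtingerBar, Module.End.mul_apply, LinearMap.smul_apply, hf,
    smul_smul, map_smul]
  rfl

end Plane


section Rays

open Complex Finset.HasAntidiagonal

theorem exp_mul_I_pow_ne_of_irrational {α θ₁ θ₂ : ℝ} (hα : Irrational α)
    (hθ : θ₁ - θ₂ = 2 * Real.pi * α) {m : ℕ} (hm : m ≠ 0) :
    exp (θ₁ * I) ^ m ≠ exp (θ₂ * I) ^ m := by
  intro h
  rw [← exp_nat_mul, ← exp_nat_mul] at h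
  obtain ⟨k, hk⟩ := exp_eq_exp_iff_exists_int.mp h
  have hreal : (m : ℝ) * θ₁ = m * θ₂ + k * (2 * Real.pi) := by
    simpa using congrArg Complex.im hk
  apply hα
  refine ⟨k / m, ?_⟩
  push_cast
  field_simp
  nlinarith [Real.pi_pos]

theorem eq_zero_of_pow_mul_add_inv_pow_mul {ζ₁ ζ₂ a b : ℂ} {n : ℕ} (hζ₁ : ζ₁ ≠ 0)
    (hζ₂ : ζ₂ ≠ 0) (hne : ζ₁ ^ (2 * n) ≠ ζ₂ ^ (2 * n))
    (h₁ : ζ₁ ^ n * a + ζ₁⁻¹ ^ n * b = 0) (h₂ : ζ₂ ^ n * a + ζ₂⁻¹ ^ n * b = 0) :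
    a = 0 ∧ b = 0 := by
  have clear_inv : ∀ ζ : ℂ, ζ ≠ 0 → ζ ^ n * a + ζ⁻¹ ^ n * b = 0 → ζ ^ (2 * n) * a + b = 0 :=
    fun ζ hζ h => by
      have e : ζ ^ n * ζ⁻¹ ^ n = 1 := by rw [← mul_pow, mul_inv_cancel₀ hζ, one_pow]
      linear_combination ζ ^ n * h - b * e
  have e₁ := clear_inv ζ₁ hζ₁ h₁
  have ha : a = 0 := by
    have : (ζ₁ ^ (2 * n) - ζ₂ ^ (2 * n)) * a = 0 := by
      linear_combination e₁ - clear_inv ζ₂ hζ₂ h₂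
    exact (mul_eq_zero.mp this).resolve_left (sub_ne_zero.mpr hne)
  exact ⟨ha, by simpa [ha] using e₁⟩

theorem eq_zero_of_ray_sums_eq_zero {μ ζ₁ ζ₂ : ℂ} {c : ℕ → ℕ → ℂ} (hζ₁ : ζ₁ ≠ 0) (hζ₂ : ζ₂ ≠ 0)
    (hne : ∀ n ≠ 0, ζ₁ ^ (2 * n) ≠ ζ₂ ^ (2 * n))
    (hrec : ∀ j k, c (j + 1) (k + 1) = μ * c j k)
    (hray₁ : ∀ n, ∑ p ∈ antidiagonal n, n.choose p.1 * ζ₁ ^ p.1 * ζ₁⁻¹ ^ p.2 * c p.1 p.2 = 0)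
    (hray₂ : ∀ n, ∑ p ∈ antidiagonal n, n.choose p.1 * ζ₂ ^ p.1 * ζ₂⁻¹ ^ p.2 * c p.1 p.2 = 0)
    (j k : ℕ) : c j k = 0 := by
  suffices ∀ n : ℕ, ∀ p ∈ antidiagonal n, c p.1 p.2 = 0 from
    this _ (j, k) (mem_antidiagonal.mpr rfl)
  intro n
  induction n using Nat.strong_induction_on with
  | _ n ih =>
  have hinner : ∀ j k, (j + 1, k + 1) ∈ antidiagonal n → c (j + 1) (k + 1) = 0 := by
    intro j k hp
    rw [mem_antidiagonal] at hp
    rw [hrec, ih (j + k) (by omega) (j, k) (mem_antidiagonal.mpr rfl), mul_zero]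
  rcases Nat.eq_zero_or_pos n with rfl | hn
  · intro p hp
    rw [Finset.Nat.antidiagonal_zero, Finset.mem_singleton] at hp
    simpa [hp] using hray₁ 0
  have hsum : ∀ ζ : ℂ, ∑ p ∈ antidiagonal n, n.choose p.1 * ζ ^ p.1 * ζ⁻¹ ^ p.2 * c p.1 p.2 =
      ζ ^ n * c n 0 + ζ⁻¹ ^ n * c 0 n := by
    intro ζ
    rw [Finset.sum_eq_add_of_mem (n, 0) (0, n) (by simp) (by simp) (by simp; omega)]
    · simp
    · rintro ⟨_ | j, _ | k⟩ hp ⟨h₁, h₂⟩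
      · simp at hp; omega
      · simp at hp h₂; omega
      · simp at hp h₁; omega
      · rw [hinner j k hp, mul_zero]
  obtain ⟨hn0, h0n⟩ := eq_zero_of_pow_mul_add_inv_pow_mul hζ₁ hζ₂ (hne n hn.ne')
    ((hsum ζ₁).symm.trans (hray₁ n)) ((hsum ζ₂).symm.trans (hray₂ n))
  rintro ⟨_ | j, _ | k⟩ hp <;> rw [mem_antidiagonal] at hp
  · omega
  · simpa [← hp] using h0n
  · simpa [← hp] using hn0
  · exact hinner j k (mem_antidiagonal.mpr hp)

end Rays

open Complex Finset.HasAntidiagonal in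
theorem stmt1_general
    (Ω : Set (ℝ × ℝ)) (hΩ : IsOpen Ω)
    (lam : ℝ)
    (u : ℝ × ℝ → ℂ)
    (hu_an : AnalyticOnNhd ℝ u Ω)
    (hu_eq : ∀ x ∈ Ω, pd1 (pd1 u) x + pd2 (pd2 u) x + (lam : ℂ) * u x = 0)
    (x₀ : ℝ × ℝ) (hx₀ : x₀ ∈ Ω)
    (h : ℝ) (hh : 0 < h)
    (α : ℝ) (hirr : Irrational α)
    (θm θp : ℝ) (hangle : θp - θm = 2 * Real.pi * α)
    (hnodal_p : ∀ r : ℝ, 0 ≤ r → r ≤ h →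
      u (x₀.1 + r * Real.cos θp, x₀.2 + r * Real.sin θp) = 0)
    (hnodal_m : ∀ r : ℝ, 0 ≤ r → r ≤ h →
      u (x₀.1 + r * Real.cos θm, x₀.2 + r * Real.sin θm) = 0) :
    ∀ k : ℕ, iteratedFDeriv ℝ k u x₀ = 0 := by
  let Ω' : TopologicalSpace.Opens (ℝ × ℝ) := ⟨Ω, hΩ⟩
  have hu : u ∈ smoothOn Ω' := hu_an.contDiffOn hΩ.uniqueDiffOn
  let U : smoothOn Ω' := ⟨Ω.indicator u, indicator_mem_smoothOn hu⟩
  have hUu : (U : ℝ × ℝ → ℂ) =ᶠ[𝓝 x₀] u :=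
    eventually_of_mem (hΩ.mem_nhds hx₀) fun x hx => Set.indicator_of_mem hx u
  let c : ℕ → ℕ → ℂ := fun j k =>
    ((wirtinger Ω' ^ j * wirtingerBar Ω' ^ k) U : ℝ × ℝ → ℂ) x₀
  have hdiag : ∀ n (a b : ℝ), iteratedFDeriv ℝ n u x₀ (fun _ => (a, b)) =
      ∑ p ∈ antidiagonal n, n.choose p.1 * ((a : ℂ) + b * I) ^ p.1 * ((a : ℂ) - b * I) ^ p.2 *
        c p.1 p.2 := fun n a b => by
    rw [← (hUu.iteratedFDeriv ℝ n).eq_of_nhds, ← partialDeriv_pow_apply _ U n hx₀,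
      partialDeriv_pow_apply_eq_sum]
  have hray : ∀ θ : ℝ, (∀ r : ℝ, 0 ≤ r → r ≤ h →
      u (x₀.1 + r * Real.cos θ, x₀.2 + r * Real.sin θ) = 0) → ∀ n,
      ∑ p ∈ antidiagonal n, n.choose p.1 * exp (θ * I) ^ p.1 * (exp (θ * I))⁻¹ ^ p.2 *
        c p.1 p.2 = 0 := fun θ hθ n => by
    have := iteratedFDeriv_apply_const_eq_zero_of_segment hΩ hu_an hx₀
      (Real.cos θ, Real.sin θ) hh (fun t ht => by convert hθ t ht.1 ht.2 using 2; ext <;> simp) n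
    rwa [hdiag, ofReal_cos, ofReal_sin, cos_add_sin_I, cos_sub_sin_I, neg_mul, exp_neg] at this
  have hcoef : ∀ j k, c j k = 0 :=
    eq_zero_of_ray_sums_eq_zero (exp_ne_zero _) (exp_ne_zero _)
      (fun n hn => exp_mul_I_pow_ne_of_irrational hirr hangle (by omega))
      (fun j k => wirtinger_pow_succ_mul_wirtingerBar_pow_succ_apply
        (laplacianOn_indicator hu hu_eq) j k x₀)
      (hray θp hnodal_p) (hray θm hnodal_m)
  have hloc : u =ᶠ[𝓝 x₀] 0 :=
    eventuallyEq_zero_of_iteratedFDeriv_apply_const_eq_zero (hu_an x₀ hx₀) fun n v => by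
      simp [hdiag n v.1 v.2, hcoef]
  intro k
  simpa using (hloc.iteratedFDeriv ℝ k).eq_of_nhds

/-- Two nodal lines of a Laplacian eigenfunction intersecting at `x₀ ∈ Ω` at an irrational
angle `2πα`: the eigenfunction has infinite vanishing order at `x₀`. -/
theorem stmt1
    (Ω : Set (ℝ × ℝ)) (hΩ : IsOpen Ω)
    (lam : ℝ) (hlam : 0 < lam)
    (u : ℝ × ℝ → ℂ)
    (hu_an : AnalyticOnNhd ℝ u Ω)
    (hu_eq : ∀ x ∈ Ω, pd1 (pd1 u) x + pd2 (pd2 u) x + (lam : ℂ) * u x = 0)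
    (x₀ : ℝ × ℝ) (hx₀ : x₀ ∈ Ω)
    (h : ℝ) (hh : 0 < h)
    (hdisk : ∀ x : ℝ × ℝ, (x.1 - x₀.1) ^ 2 + (x.2 - x₀.2) ^ 2 ≤ h ^ 2 → x ∈ Ω)
    (α : ℝ) (hα : α ∈ Set.Ioo (0 : ℝ) 1) (hirr : Irrational α)
    (θm θp : ℝ) (hangle : θp - θm = 2 * Real.pi * α)
    (hnodal_p : ∀ r : ℝ, 0 ≤ r → r ≤ h →
      u (x₀.1 + r * Real.cos θp, x₀.2 + r * Real.sin θp) = 0)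
    (hnodal_m : ∀ r : ℝ, 0 ≤ r → r ≤ h →
      u (x₀.1 + r * Real.cos θm, x₀.2 + r * Real.sin θm) = 0) :
    ∀ k : ℕ, iteratedFDeriv ℝ k u x₀ = 0 :=
  stmt1_general Ω hΩ lam u hu_an hu_eq x₀ hx₀ h hh α hirr θm θp hangle hnodal_p hnodal_m
end

section
/- Let Ω, λ, u, α, θ₀, h, Γ_h^−, Γ_h^+ be as in the context, and let n ≥ 3 be an integer. Suppose Γ_h^− and Γ_h^+ are nodal lines of u, i.e., u(x) = 0 for all x ∈ Γ_h^− ∪ Γ_h^+. If α ≠ q/p for all integers p, q with 1 ≤ p ≤ n−1 and 1 ≤ q ≤ p−1, then u vanishes at 0 up to order n, i.e., every partial derivative of u of order strictly less than n vanishes at 0. -/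
open scoped Topology ENNReal
open Filter Finset Complex

namespace FormalMultilinearSeries

variable {𝕜 : Type*} [NontriviallyNormedField 𝕜] {E F : Type*} [NormedAddCommGroup E]
  [NormedSpace 𝕜 E] [NormedAddCommGroup F] [NormedSpace 𝕜 F]

theorem derivSeries_congr {p q : FormalMultilinearSeries 𝕜 E F} {n : ℕ}
    (h : p (n + 1) = q (n + 1)) : p.derivSeries n = q.derivSeries n := by
  have : p (1 + n) = q (1 + n) := by rwa [add_comm]
  ext v
  simp [derivSeries, changeOriginSeries, changeOriginSeriesTerm, this]

noncomputable def lineDerivSeries (p : FormalMultilinearSeries 𝕜 E F) (e : E) :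
    FormalMultilinearSeries 𝕜 E F :=
  (ContinuousLinearMap.apply 𝕜 F e).compFormalMultilinearSeries p.derivSeries

theorem lineDerivSeries_congr {p q : FormalMultilinearSeries 𝕜 E F} (e : E) {n : ℕ}
    (h : p (n + 1) = q (n + 1)) : p.lineDerivSeries e n = q.lineDerivSeries e n := by
  simp [lineDerivSeries, derivSeries_congr h]

theorem lineDerivSeries_eq_zero {p : FormalMultilinearSeries 𝕜 E F} (e : E) {n : ℕ}
    (h : p (n + 1) = 0) : p.lineDerivSeries e n = 0 := by
  ext v
  simp [lineDerivSeries, derivSeries_eq_zero _ h]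

noncomputable def homogeneousSeries (p : FormalMultilinearSeries 𝕜 E F) (m : ℕ) :
    FormalMultilinearSeries 𝕜 E F :=
  Function.update 0 m (p m)

theorem hasFPowerSeriesOnBall_homogeneousSeries (p : FormalMultilinearSeries 𝕜 E F) (m : ℕ) :
    HasFPowerSeriesOnBall (fun y => p m fun _ => y) (p.homogeneousSeries m) 0 ⊤ := by
  have hne : ∀ k ≠ m, p.homogeneousSeries m k = 0 := fun k hk => Function.update_of_ne hk _ _
  refine ⟨(radius_eq_top_of_forall_image_add_eq_zero _ (m + 1) fun k => hne _ (by omega)).ge,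
    ENNReal.zero_lt_top, fun {y} _ => ?_⟩
  convert hasSum_single (f := fun k => p.homogeneousSeries m k fun _ => y) m
    fun k hk => by simp [hne k hk] using 1
  simp [homogeneousSeries]

end FormalMultilinearSeries

open FormalMultilinearSeries

section PowerSeries

variable {𝕜 : Type*} [NontriviallyNormedField 𝕜] {E F : Type*} [NormedAddCommGroup E]
  [NormedSpace 𝕜 E] [NormedAddCommGroup F] [NormedSpace 𝕜 F]
  {f : E → F} {p : FormalMultilinearSeries 𝕜 E F}

theorem HasFPowerSeriesOnBall.fderiv_apply [CompleteSpace F] {x : E} {r : ℝ≥0∞}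
    (hf : HasFPowerSeriesOnBall f p x r) (e : E) :
    HasFPowerSeriesOnBall (fun y => fderiv 𝕜 f y e) (p.lineDerivSeries e) x r :=
  (ContinuousLinearMap.apply 𝕜 F e).comp_hasFPowerSeriesOnBall hf.fderiv

theorem HasFPowerSeriesAt.apply_diag_eq_zero_of_frequently_eq_zero
    (hf : HasFPowerSeriesAt f p 0) (w : E)
    (h : ∃ᶠ t in 𝓝[≠] (0 : 𝕜), f (t • w) = 0) (k : ℕ) : p k (fun _ => w) = 0 := by
  let L : 𝕜 →L[𝕜] E := (ContinuousLinearMap.id 𝕜 𝕜).smulRight w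
  have hL : HasFPowerSeriesAt (f ∘ L) (p.compContinuousLinearMap L) 0 :=
    (map_zero L ▸ hf).compContinuousLinearMap
  have hev : f ∘ L =ᶠ[𝓝 0] 0 := hL.analyticAt.frequently_zero_iff_eventually_zero.1 h
  have hk : p.compContinuousLinearMap L k = 0 := congrFun (hL.eq_zero_of_eventually hev) k
  simpa only [compContinuousLinearMap_apply, Function.comp_def, L,
    ContinuousLinearMap.smulRight_apply, ContinuousLinearMap.id_apply, one_smul,
    _root_.zero_apply] using congrArg (fun P => P fun _ => (1 : 𝕜)) hk

theorem HasFPowerSeriesAt.apply_diag_eq_zero_of_eq_zero_on_segment {E F : Type*}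
    [NormedAddCommGroup E] [NormedSpace ℝ E] [NormedAddCommGroup F] [NormedSpace ℝ F]
    {f : E → F} {p : FormalMultilinearSeries ℝ E F} (hf : HasFPowerSeriesAt f p 0) (w : E)
    {h : ℝ} (hh : 0 < h) (hw : ∀ r, 0 ≤ r → r ≤ h → f (r • w) = 0) (k : ℕ) :
    p k (fun _ => w) = 0 := by
  have : ∀ᶠ t in 𝓝[>] (0 : ℝ), f (t • w) = 0 := by
    filter_upwards [Ioo_mem_nhdsGT hh] with t ht using hw t ht.1.le ht.2.le
  exact hf.apply_diag_eq_zero_of_frequently_eq_zero w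
    (this.frequently.filter_mono (nhdsWithin_mono _ fun t ht => ne_of_gt ht)) k

theorem HasFPowerSeriesAt.iteratedFDeriv_eq_zero [CompleteSpace F] {x : E}
    (hf : HasFPowerSeriesAt f p x) {n : ℕ} (h : ∀ k < n, ∀ y, p k (fun _ => y) = 0) {k : ℕ}
    (hk : k < n) : iteratedFDeriv 𝕜 k f x = 0 := by
  obtain ⟨r, hr⟩ := hf
  -- Only the diagonal values of `p` matter, so the terms of degree `< n` may be replaced by `0`.
  let q : FormalMultilinearSeries 𝕜 E F := fun j => if j < n then 0 else p j
  have hq : HasFPowerSeriesOnBall f q x r := by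
    refine ⟨hr.r_le.trans (radius_le_of_le fun j => ?_), hr.r_pos, fun {y} hy => ?_⟩
    · by_cases hj : j < n <;> simp [q, hj]
    · convert hr.hasSum hy using 2 with j
      by_cases hj : j < n <;> simp [q, hj, h]
  ext v
  simp [hq.iteratedFDeriv_eq_sum_of_completeSpace, q, hk]

end PowerSeries

section Laplacian

noncomputable def planarLaplacian (u : ℝ × ℝ → ℂ) : ℝ × ℝ → ℂ :=
  fun x => pd1 (pd1 u) x + pd2 (pd2 u) x

noncomputable def laplacianSeries (p : FormalMultilinearSeries ℝ (ℝ × ℝ) ℂ) :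
    FormalMultilinearSeries ℝ (ℝ × ℝ) ℂ :=
  (p.lineDerivSeries (1, 0)).lineDerivSeries (1, 0)
    + (p.lineDerivSeries (0, 1)).lineDerivSeries (0, 1)

theorem laplacianSeries_congr {p q : FormalMultilinearSeries ℝ (ℝ × ℝ) ℂ} {n : ℕ}
    (h : p (n + 2) = q (n + 2)) : laplacianSeries p n = laplacianSeries q n := by
  simp only [laplacianSeries, FormalMultilinearSeries.add_apply]
  rw [lineDerivSeries_congr _ (lineDerivSeries_congr _ h),
    lineDerivSeries_congr _ (lineDerivSeries_congr _ h)]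

theorem laplacianSeries_eq_zero {p : FormalMultilinearSeries ℝ (ℝ × ℝ) ℂ} {n : ℕ}
    (h : p (n + 2) = 0) : laplacianSeries p n = 0 := by
  simp [laplacianSeries, lineDerivSeries_eq_zero _ (lineDerivSeries_eq_zero _ h)]

theorem HasFPowerSeriesOnBall.planarLaplacian {u : ℝ × ℝ → ℂ}
    {p : FormalMultilinearSeries ℝ (ℝ × ℝ) ℂ} {x : ℝ × ℝ} {r : ℝ≥0∞}
    (hu : HasFPowerSeriesOnBall u p x r) :
    HasFPowerSeriesOnBall (planarLaplacian u) (laplacianSeries p) x r :=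
  ((hu.fderiv_apply _).fderiv_apply _).add ((hu.fderiv_apply _).fderiv_apply _)

theorem planarLaplacian_homogeneous (p : FormalMultilinearSeries ℝ (ℝ × ℝ) ℂ) (m : ℕ)
    (y : ℝ × ℝ) :
    planarLaplacian (fun z => p (m + 2) fun _ => z) y = laplacianSeries p m fun _ => y := by
  have hsum := (hasFPowerSeriesOnBall_homogeneousSeries p (m + 2)).planarLaplacian.hasSum
    (y := y) (by simp)
  rw [zero_add] at hsum
  refine hsum.unique ?_
  rw [laplacianSeries_congr (q := p.homogeneousSeries (m + 2)) (by simp [homogeneousSeries])]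
  refine hasSum_single m fun k hk => ?_
  simp [laplacianSeries_eq_zero (show p.homogeneousSeries (m + 2) (k + 2) = 0 by
    simp [homogeneousSeries, hk])]

theorem planarLaplacian_homogeneous_eq_zero {u : ℝ × ℝ → ℂ}
    {p : FormalMultilinearSeries ℝ (ℝ × ℝ) ℂ} (hp : HasFPowerSeriesAt u p 0) {μ : ℂ}
    (hu : ∀ᶠ x in 𝓝 0, planarLaplacian u x + μ * u x = 0) {m : ℕ}
    (hm : ∀ y, p m (fun _ => y) = 0) (y : ℝ × ℝ) :
    planarLaplacian (fun z => p (m + 2) fun _ => z) y = 0 := by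
  obtain ⟨r, hr⟩ := hp
  have hS : HasFPowerSeriesAt 0 (laplacianSeries p + μ • p) 0 :=
    (hr.planarLaplacian.hasFPowerSeriesAt.add hr.hasFPowerSeriesAt.const_smul).congr hu
  simpa [planarLaplacian_homogeneous, hm] using hS.apply_eq_zero m y

end Laplacian

section BinaryForm

theorem pd1_eq_deriv {u : ℝ × ℝ → ℂ} {x : ℝ × ℝ} (hu : DifferentiableAt ℝ u x) :
    pd1 u x = deriv (fun s => u (s, x.2)) x.1 := by
  have : HasDerivAt (fun s : ℝ => (s, x.2)) ((1 : ℝ), (0 : ℝ)) x.1 :=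
    (hasDerivAt_id x.1).prodMk (hasDerivAt_const x.1 x.2)
  exact (hu.hasFDerivAt.comp_hasDerivAt x.1 this).deriv.symm

theorem pd2_eq_deriv {u : ℝ × ℝ → ℂ} {x : ℝ × ℝ} (hu : DifferentiableAt ℝ u x) :
    pd2 u x = deriv (fun s => u (x.1, s)) x.2 := by
  have : HasDerivAt (fun s : ℝ => (x.1, s)) ((0 : ℝ), (1 : ℝ)) x.2 :=
    (hasDerivAt_const x.2 x.1).prodMk (hasDerivAt_id x.2)
  exact (hu.hasFDerivAt.comp_hasDerivAt x.2 this).deriv.symm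

theorem hasDerivAt_ofReal_pow (k : ℕ) (s : ℝ) :
    HasDerivAt (fun t : ℝ => (t : ℂ) ^ k) (k * (s : ℂ) ^ (k - 1)) s :=
  (hasDerivAt_pow k (s : ℂ)).comp_ofReal

noncomputable def binaryForm (m : ℕ) (c : ℕ × ℕ → ℂ) (y : ℝ × ℝ) : ℂ :=
  ∑ ij ∈ antidiagonal m, c ij * (y.1 : ℂ) ^ ij.1 * (y.2 : ℂ) ^ ij.2

theorem binaryForm_one_zero (m : ℕ) (c : ℕ × ℕ → ℂ) : binaryForm m c (1, 0) = c (m, 0) := by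
  rw [binaryForm, sum_eq_single (m, 0)]
  · simp
  · intro ij hij hne
    have : ij.2 ≠ 0 := fun h => hne (Prod.ext (by
      rw [HasAntidiagonal.mem_antidiagonal] at hij; omega) h)
    simp [this]
  · simp

theorem differentiable_binaryForm (m : ℕ) (c : ℕ × ℕ → ℂ) :
    Differentiable ℝ (binaryForm m c) := by
  unfold binaryForm
  fun_prop

theorem pd1_binaryForm (m : ℕ) (c : ℕ × ℕ → ℂ) :
    pd1 (binaryForm (m + 1) c)
      = binaryForm m fun ij => (ij.1 + 1 : ℂ) * c (ij.1 + 1, ij.2) := by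
  funext x
  rw [pd1_eq_deriv (differentiable_binaryForm _ _ x)]
  dsimp only [binaryForm]
  refine (HasDerivAt.fun_sum fun ij _ =>
    ((hasDerivAt_ofReal_pow ij.1 x.1).const_mul (c ij)).mul_const _).deriv.trans ?_
  rw [Nat.sum_antidiagonal_succ]
  simp only [CharP.cast_eq_zero, zero_mul, mul_zero, zero_add, Nat.cast_add, Nat.cast_one,
    add_tsub_cancel_right]
  exact sum_congr rfl fun ij _ => by ring

theorem pd2_binaryForm (m : ℕ) (c : ℕ × ℕ → ℂ) :
    pd2 (binaryForm (m + 1) c)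
      = binaryForm m fun ij => (ij.2 + 1 : ℂ) * c (ij.1, ij.2 + 1) := by
  funext x
  rw [pd2_eq_deriv (differentiable_binaryForm _ _ x)]
  dsimp only [binaryForm]
  refine (HasDerivAt.fun_sum fun ij _ =>
    (hasDerivAt_ofReal_pow ij.2 x.2).const_mul (c ij * (x.1 : ℂ) ^ ij.1)).deriv.trans ?_
  rw [Nat.sum_antidiagonal_succ']
  simp only [CharP.cast_eq_zero, zero_mul, mul_zero, zero_add, Nat.cast_add, Nat.cast_one,
    add_tsub_cancel_right]
  exact sum_congr rfl fun ij _ => by ring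

def laplacianCoeffs (c : ℕ × ℕ → ℂ) (ij : ℕ × ℕ) : ℂ :=
  (ij.1 + 2) * (ij.1 + 1) * c (ij.1 + 2, ij.2) + (ij.2 + 2) * (ij.2 + 1) * c (ij.1, ij.2 + 2)

theorem planarLaplacian_binaryForm (m : ℕ) (c : ℕ × ℕ → ℂ) :
    planarLaplacian (binaryForm (m + 2) c) = binaryForm m (laplacianCoeffs c) := by
  funext x
  simp only [planarLaplacian, pd1_binaryForm, pd2_binaryForm, binaryForm, ← sum_add_distrib]
  refine sum_congr rfl fun ij _ => ?_
  simp only [laplacianCoeffs]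
  push_cast
  ring

theorem coeff_eq_zero_of_binaryForm_eq_zero {m : ℕ} {c : ℕ × ℕ → ℂ}
    (h : ∀ y, binaryForm m c y = 0) : ∀ ij ∈ antidiagonal m, c ij = 0 := by
  open Polynomial in
  let P : ℂ[X] := ∑ ij ∈ antidiagonal m, C (c ij) * X ^ ij.1
  have hP : P = 0 := by
    refine P.eq_zero_of_infinite_isRoot (Set.infinite_of_injective_forall_mem
      Complex.ofReal_injective fun t : ℝ => ?_)
    simpa [P, eval_finsetSum, binaryForm] using h (t, 1)
  intro ij hij
  have hcoeff : P.coeff ij.1 = c ij := by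
    rw [finsetSum_coeff, sum_eq_single ij]
    · simp
    · intro kl hkl hne
      have : kl.1 ≠ ij.1 := fun h1 => hne (Prod.ext h1 (by
        rw [HasAntidiagonal.mem_antidiagonal] at hij hkl; omega))
      simp [coeff_X_pow, Ne.symm this]
    · exact fun h' => absurd hij h'
  rw [← hcoeff, hP, Polynomial.coeff_zero]

theorem laplacianCoeffs_eq_zero_of_harmonic {m : ℕ} {c : ℕ × ℕ → ℂ}
    (h : ∀ y, planarLaplacian (binaryForm (m + 2) c) y = 0) :
    ∀ ij ∈ antidiagonal m, laplacianCoeffs c ij = 0 :=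
  coeff_eq_zero_of_binaryForm_eq_zero (by simpa [planarLaplacian_binaryForm] using h)

theorem exists_binaryForm {m : ℕ}
    (P : ContinuousMultilinearMap ℝ (fun _ : Fin m => ℝ × ℝ) ℂ) :
    ∃ c, ∀ y, P (fun _ => y) = binaryForm m c y := by
  classical
  -- Expand every argument `y = y₂ e₂ + y₁ e₁` and group the subsets `s` of positions carrying
  -- `e₂` by their cardinality.
  let e : Finset (Fin m) → Fin m → ℝ × ℝ :=
    fun s => s.piecewise (fun _ => (0, 1)) (fun _ => (1, 0))
  refine ⟨fun ij => ∑ s with (m - s.card, s.card) = ij, P (e s), fun y => ?_⟩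
  have hy : (fun _ : Fin m => y)
      = (fun _ => y.2 • ((0 : ℝ), (1 : ℝ))) + (fun _ => y.1 • ((1 : ℝ), (0 : ℝ))) := by
    ext <;> simp
  have hterm : ∀ s : Finset (Fin m),
      P (s.piecewise (fun _ => y.2 • ((0 : ℝ), (1 : ℝ)))
          (fun _ => y.1 • ((1 : ℝ), (0 : ℝ))))
        = P (e s) * (y.1 : ℂ) ^ (m - s.card) * (y.2 : ℂ) ^ s.card := by
    intro s
    have : s.piecewise (fun _ => y.2 • ((0 : ℝ), (1 : ℝ)))
          (fun _ => y.1 • ((1 : ℝ), (0 : ℝ)))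
        = fun i => s.piecewise (fun _ => y.2) (fun _ => y.1) i • e s i := by
      ext i <;> by_cases hi : i ∈ s <;> simp [e, hi]
    rw [this, P.map_smul_univ, prod_piecewise]
    simp only [univ_inter, prod_const, card_univ_sdiff, Fintype.card_fin, real_smul, ofReal_mul,
      ofReal_pow]
    ring
  rw [hy, P.map_add_univ, binaryForm]
  simp_rw [hterm, sum_mul]
  rw [← sum_fiberwise_of_maps_to (t := antidiagonal m)
    (g := fun s : Finset (Fin m) => (m - s.card, s.card))]
  · exact sum_congr rfl fun ij _ => sum_congr rfl fun s hs => by rw [← (mem_filter.1 hs).2]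
  · intro s _
    have := s.card_le_univ
    rw [Fintype.card_fin] at this
    simp only [HasAntidiagonal.mem_antidiagonal]
    omega

def binomialCoeffs (ζ : ℂ) (ij : ℕ × ℕ) : ℂ := ((ij.1 + ij.2).choose ij.1 : ℂ) * ζ ^ ij.2

theorem binaryForm_binomialCoeffs (m : ℕ) (ζ : ℂ) (y : ℝ × ℝ) :
    binaryForm m (binomialCoeffs ζ) y = (y.1 + ζ * y.2) ^ m := by
  rw [(Commute.all _ _).add_pow', binaryForm]
  refine sum_congr rfl fun ij hij => ?_
  rw [HasAntidiagonal.mem_antidiagonal] at hij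
  simp only [binomialCoeffs, hij, nsmul_eq_mul]
  ring

theorem Nat.choose_add_two_mul_eq_choose_mul (i j : ℕ) :
    (i + 2 + j).choose (i + 2) * ((i + 2) * (i + 1))
      = (i + (j + 2)).choose i * ((j + 2) * (j + 1)) := by
  apply Nat.eq_of_mul_eq_mul_right (Nat.mul_pos i.factorial_pos j.factorial_pos)
  calc (i + 2 + j).choose (i + 2) * ((i + 2) * (i + 1)) * (i.factorial * j.factorial)
      = (i + 2 + j).choose (i + 2) * (i + 2).factorial * j.factorial := by
        simp only [Nat.factorial_succ]; ring
    _ = (i + 2 + j).factorial := by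
        simpa using Nat.choose_mul_factorial_mul_factorial (Nat.le_add_right (i + 2) j)
    _ = (i + (j + 2)).choose i * i.factorial * (j + 2).factorial := by
        rw [show i + 2 + j = i + (j + 2) by ring]
        simpa using (Nat.choose_mul_factorial_mul_factorial (Nat.le_add_right i (j + 2))).symm
    _ = (i + (j + 2)).choose i * ((j + 2) * (j + 1)) * (i.factorial * j.factorial) := by
        simp only [Nat.factorial_succ]; ring

theorem laplacianCoeffs_binomialCoeffs {ζ : ℂ} (hζ : ζ ^ 2 = -1) (ij : ℕ × ℕ) :
    laplacianCoeffs (binomialCoeffs ζ) ij = 0 := by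
  obtain ⟨i, j⟩ := ij
  have key := congrArg (Nat.cast : ℕ → ℂ) (Nat.choose_add_two_mul_eq_choose_mul i j)
  push_cast at key
  simp only [laplacianCoeffs, binomialCoeffs]
  linear_combination ζ ^ j * key
    + ((j : ℂ) + 2) * (j + 1) * ((i + (j + 2)).choose i : ℂ) * ζ ^ j * hζ

theorem eq_zero_of_laplacianCoeffs_eq_zero {N : ℕ} {c : ℕ × ℕ → ℂ}
    (hc : ∀ i j, i + j + 2 = N → laplacianCoeffs c (i, j) = 0)
    (h0 : c (N, 0) = 0) (h1 : c (N - 1, 1) = 0) : ∀ i j, i + j = N → c (i, j) = 0 := by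
  intro i j hij
  induction j using Nat.twoStepInduction generalizing i with
  | zero => rwa [← hij] at h0
  | one => rwa [show i = N - 1 by omega]
  | more j ih _ =>
    have h := hc i j (by omega)
    simp only [laplacianCoeffs, ih (i + 2) (by omega), mul_zero, zero_add] at h
    exact (mul_eq_zero.1 h).resolve_left
      (by exact_mod_cast (by positivity : (j + 2) * (j + 1) ≠ 0))

theorem binaryForm_eq_of_laplacianCoeffs_eq_zero {N : ℕ} (hN : N ≠ 0) {c : ℕ × ℕ → ℂ}
    (hc : ∀ i j, i + j + 2 = N → laplacianCoeffs c (i, j) = 0) (h0 : c (N, 0) = 0)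
    (y : ℝ × ℝ) :
    binaryForm N c y
      = c (N - 1, 1) / (2 * I * N) * ((y.1 + I * y.2) ^ N - (y.1 + -I * y.2) ^ N) := by
  set a := c (N - 1, 1) / (2 * I * N)
  let d : ℕ × ℕ → ℂ := fun ij => c ij - a * binomialCoeffs I ij + a * binomialCoeffs (-I) ij
  have hd : ∀ i j, i + j = N → d (i, j) = 0 := by
    refine eq_zero_of_laplacianCoeffs_eq_zero (fun i j hij => ?_) ?_ ?_
    · have hI := laplacianCoeffs_binomialCoeffs I_sq (i, j)
      have hI' := laplacianCoeffs_binomialCoeffs (by rw [neg_sq, I_sq]) (i, j)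
      have := hc i j hij
      simp only [laplacianCoeffs, d] at hI hI' this ⊢
      linear_combination this - a * hI + a * hI'
    · simp [d, binomialCoeffs, h0]
    · simp only [d, binomialCoeffs, Nat.sub_add_cancel (Nat.one_le_iff_ne_zero.2 hN),
        Nat.choose_symm (Nat.one_le_iff_ne_zero.2 hN), Nat.choose_one_right, a]
      field_simp
      ring
  rw [← binaryForm_binomialCoeffs, ← binaryForm_binomialCoeffs]
  have hd0 : binaryForm N d y = 0 := sum_eq_zero fun ⟨i, j⟩ hij => by
    simp [hd i j (HasAntidiagonal.mem_antidiagonal.1 hij)]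
  have hlin : binaryForm N c y - a * (binaryForm N (binomialCoeffs I) y
      - binaryForm N (binomialCoeffs (-I)) y) = binaryForm N d y := by
    simp only [binaryForm, d, mul_sub, mul_sum, ← sum_sub_distrib]
    exact sum_congr rfl fun _ _ => by ring
  linear_combination hlin + hd0

theorem ofReal_cos_add_I_mul_sin_pow_sub (θ : ℝ) (N : ℕ) :
    ((Real.cos θ : ℂ) + I * Real.sin θ) ^ N - ((Real.cos θ : ℂ) + -I * Real.sin θ) ^ N
      = 2 * I * Real.sin (N * θ) := by
  have h1 := cos_add_sin_mul_I_pow N θ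
  have h2 := cos_add_sin_mul_I_pow N (-θ)
  simp only [mul_neg, Complex.cos_neg, Complex.sin_neg] at h2
  push_cast
  linear_combination h1 - h2

theorem binaryForm_eq_zero_of_laplacianCoeffs_eq_zero {N : ℕ} {c : ℕ × ℕ → ℂ}
    (hc : ∀ i j, i + j + 2 = N → laplacianCoeffs c (i, j) = 0) {θ : ℝ}
    (h0 : binaryForm N c (1, 0) = 0) (hθ : binaryForm N c (Real.cos θ, Real.sin θ) = 0)
    (hsin : Real.sin (N * θ) ≠ 0) (y : ℝ × ℝ) : binaryForm N c y = 0 := by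
  have hN : N ≠ 0 := by
    rintro rfl
    simp at hsin
  rw [binaryForm_one_zero] at h0
  have ha := binaryForm_eq_of_laplacianCoeffs_eq_zero hN hc h0 (Real.cos θ, Real.sin θ)
  rw [hθ, ofReal_cos_add_I_mul_sin_pow_sub] at ha
  have hne : 2 * I * (Real.sin (N * θ) : ℂ) ≠ 0 :=
    mul_ne_zero (mul_ne_zero two_ne_zero I_ne_zero) (by exact_mod_cast hsin)
  rw [binaryForm_eq_of_laplacianCoeffs_eq_zero hN hc h0,
    (mul_eq_zero.1 ha.symm).resolve_right hne, zero_mul]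

end BinaryForm

theorem apply_diag_eq_zero_of_eigenfunction_of_nodal_rays {u : ℝ × ℝ → ℂ}
    {p : FormalMultilinearSeries ℝ (ℝ × ℝ) ℂ} (hp : HasFPowerSeriesAt u p 0) {μ : ℂ}
    (hu : ∀ᶠ x in 𝓝 0, planarLaplacian u x + μ * u x = 0) {θ : ℝ}
    (h0 : ∀ k, p k (fun _ => ((1 : ℝ), (0 : ℝ))) = 0)
    (hθ : ∀ k, p k (fun _ => (Real.cos θ, Real.sin θ)) = 0) {n : ℕ}
    (hsin : ∀ m, 0 < m → m < n → Real.sin (m * θ) ≠ 0) :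
    ∀ m < n, ∀ y, p m (fun _ => y) = 0 := by
  intro m
  induction m using Nat.strong_induction_on with
  | _ m ih =>
  intro hmn y
  rcases Nat.eq_zero_or_pos m with rfl | hm
  · rw [Subsingleton.elim (fun _ : Fin 0 => y) (fun _ => ((1 : ℝ), (0 : ℝ)))]
    exact h0 0
  obtain ⟨c, hc⟩ := exists_binaryForm (p m)
  rw [hc]
  refine binaryForm_eq_zero_of_laplacianCoeffs_eq_zero (fun i j hij => ?_)
    ((hc _).symm.trans (h0 m)) ((hc _).symm.trans (hθ m)) (hsin m hm hmn) y
  subst hij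
  refine laplacianCoeffs_eq_zero_of_harmonic (m := i + j) (fun z => ?_) (i, j) (by simp)
  rw [← funext hc]
  exact planarLaplacian_homogeneous_eq_zero hp hu (ih (i + j) (by omega) (by omega)) z

theorem Real.sin_nat_mul_mul_pi_ne_zero {α : ℝ} (hα : α ∈ Set.Ioo (0 : ℝ) 1) {m : ℕ}
    (hm : 0 < m) (h : ∀ q : ℕ, 1 ≤ q → q ≤ m - 1 → α ≠ q / m) :
    Real.sin (m * (α * Real.pi)) ≠ 0 := by
  intro h0
  obtain ⟨k, hk⟩ := Real.sin_eq_zero_iff.1 h0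
  have hm' : (0 : ℝ) < m := by exact_mod_cast hm
  have hkα : (k : ℝ) = m * α :=
    mul_right_cancel₀ Real.pi_ne_zero (by rw [hk]; ring)
  have hk0 : 0 < k := by
    have : (0 : ℝ) < k := by rw [hkα]; exact mul_pos hm' hα.1
    exact_mod_cast this
  have hkm : k < m := by
    have : (k : ℝ) < m := by rw [hkα]; nlinarith [hα.2]
    exact_mod_cast this
  lift k to ℕ using hk0.le
  refine h k (by omega) (by omega) ?_
  rw [eq_div_iff hm'.ne']
  push_cast at hkα
  linarith

theorem stmt4_general
    (Ω : Set (ℝ × ℝ)) (hΩ : IsOpen Ω)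
    (lam : ℝ)
    (u : ℝ × ℝ → ℂ)
    (hu_an : AnalyticOnNhd ℝ u Ω)
    (hu_eq : ∀ x ∈ Ω, pd1 (pd1 u) x + pd2 (pd2 u) x + (lam : ℂ) * u x = 0)
    (α : ℝ) (hα : α ∈ Set.Ioo (0 : ℝ) 1)
    (θ₀ : ℝ) (hθ₀ : θ₀ = α * Real.pi)
    (h : ℝ) (hh : 0 < h)
    (hdisk : ∀ x : ℝ × ℝ, x.1 ^ 2 + x.2 ^ 2 ≤ h ^ 2 → x ∈ Ω)
    (n : ℕ)
    (hnodal_m : ∀ r : ℝ, 0 ≤ r → r ≤ h → u (r, 0) = 0)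
    (hnodal_p : ∀ r : ℝ, 0 ≤ r → r ≤ h → u (r * Real.cos θ₀, r * Real.sin θ₀) = 0)
    (hαpq : ∀ p q : ℕ, 1 ≤ p → p ≤ n - 1 → 1 ≤ q → q ≤ p - 1 → α ≠ (q : ℝ) / (p : ℝ)) :
    ∀ k : ℕ, k < n → iteratedFDeriv ℝ k u (0, 0) = 0 := by
  have h0 : (0 : ℝ × ℝ) ∈ Ω := hdisk 0 (by simp [sq_nonneg])
  obtain ⟨p, hp⟩ := hu_an 0 h0
  have hvanish := apply_diag_eq_zero_of_eigenfunction_of_nodal_rays hp (μ := lam) (θ := θ₀)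
    (n := n) (eventually_of_mem (hΩ.mem_nhds h0) hu_eq)
    (hp.apply_diag_eq_zero_of_eq_zero_on_segment _ hh fun r h1 h2 => by
      simpa using hnodal_m r h1 h2)
    (hp.apply_diag_eq_zero_of_eq_zero_on_segment _ hh fun r h1 h2 => by
      simpa using hnodal_p r h1 h2)
    fun m hm hmn => by
      rw [hθ₀]
      exact Real.sin_nat_mul_mul_pi_ne_zero hα hm fun q h1 h2 => hαpq m q hm (by omega) h1 h2
  exact fun k hk => hp.iteratedFDeriv_eq_zero hvanish hk

/-- Two nodal lines intersecting at the origin at angle `θ₀ = απ` with the rational-angle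
avoidance condition: the eigenfunction vanishes at `0` up to order `n`. -/
theorem stmt4
    (Ω : Set (ℝ × ℝ)) (hΩ : IsOpen Ω)
    (lam : ℝ) (hlam : 0 < lam)
    (u : ℝ × ℝ → ℂ)
    (hu_an : AnalyticOnNhd ℝ u Ω)
    (hu_eq : ∀ x ∈ Ω, pd1 (pd1 u) x + pd2 (pd2 u) x + (lam : ℂ) * u x = 0)
    (α : ℝ) (hα : α ∈ Set.Ioo (0 : ℝ) 1)
    (θ₀ : ℝ) (hθ₀ : θ₀ = α * Real.pi)
    (h : ℝ) (hh : 0 < h)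
    (hdisk : ∀ x : ℝ × ℝ, x.1 ^ 2 + x.2 ^ 2 ≤ h ^ 2 → x ∈ Ω)
    (n : ℕ) (hn : 3 ≤ n)
    (hnodal_m : ∀ r : ℝ, 0 ≤ r → r ≤ h → u (r, 0) = 0)
    (hnodal_p : ∀ r : ℝ, 0 ≤ r → r ≤ h → u (r * Real.cos θ₀, r * Real.sin θ₀) = 0)
    (hαpq : ∀ p q : ℕ, 1 ≤ p → p ≤ n - 1 → 1 ≤ q → q ≤ p - 1 → α ≠ (q : ℝ) / (p : ℝ)) :
    ∀ k : ℕ, k < n → iteratedFDeriv ℝ k u (0, 0) = 0 :=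
  stmt4_general Ω hΩ lam u hu_an hu_eq α hα θ₀ hθ₀ h hh hdisk n hnodal_m hnodal_p hαpq
end

section
/- Let Ω, λ, u, α, θ₀, h, Γ_h^−, Γ_h^+, ν⁻, ν⁺ be as in the context, and let n ≥ 3 be an integer. Suppose Γ_h^− and Γ_h^+ are singular lines of u, i.e., ∇u(x)·ν⁻ = 0 for all x ∈ Γ_h^− and ∇u(x)·ν⁺ = 0 for all x ∈ Γ_h^+. If u(0) = 0 and α ≠ q/p for all integers p, q with 1 ≤ p ≤ n−1 and 1 ≤ q ≤ p−1, then u vanishes at 0 up to order n, i.e., every partial derivative of u of order strictly less than n vanishes at 0. -/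
open Set Filter Topology
open scoped ContDiff

theorem Fin.snoc_const {α : Type*} {n : ℕ} (a : α) :
    (Fin.snoc (fun _ : Fin n => a) a : Fin (n + 1) → α) = fun _ => a := by
  funext i
  refine Fin.lastCases ?_ (fun i => ?_) i <;> simp

theorem Fin.prod_comp_snoc {α M : Type*} [CommMonoid M] {n : ℕ} (g : α → M) (m : Fin n → α)
    (a : α) : ∏ i, g ((Fin.snoc m a : Fin (n + 1) → α) i) = (∏ i, g (m i)) * g a := by
  simp [Fin.prod_univ_castSucc]

theorem ContinuousMultilinearMap.map_snoc_eq_fst_smul_add_snd_smul {𝕜 F : Type*}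
    [NontriviallyNormedField 𝕜] [NormedAddCommGroup F] [NormedSpace 𝕜 F] {k : ℕ}
    (A : ContinuousMultilinearMap 𝕜 (fun _ : Fin (k + 1) => 𝕜 × 𝕜) F) (m : Fin k → 𝕜 × 𝕜)
    (v : 𝕜 × 𝕜) :
    A (Fin.snoc m v) = v.1 • A (Fin.snoc m (1, 0)) + v.2 • A (Fin.snoc m (0, 1)) := by
  have hv : v = v.1 • ((1 : 𝕜), (0 : 𝕜)) + v.2 • ((0 : 𝕜), (1 : 𝕜)) := by ext <;> simp
  simp only [← A.curryRight_apply]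
  rw [hv, map_add, map_smul, map_smul]
  simp

section DirDeriv

variable (𝕜 : Type*) [NontriviallyNormedField 𝕜] {E F : Type*} [NormedAddCommGroup E]
  [NormedSpace 𝕜 E] [NormedAddCommGroup F] [NormedSpace 𝕜 F]

noncomputable def dirDeriv (v : E) (f : E → F) : E → F := fun x => fderiv 𝕜 f x v

variable {𝕜} [CompleteSpace F] {f : E → F} {x : E}

theorem AnalyticAt.dirDeriv (hf : AnalyticAt 𝕜 f x) (v : E) :
    AnalyticAt 𝕜 (dirDeriv 𝕜 v f) x :=
  ((ContinuousLinearMap.apply 𝕜 F v).analyticAt _).comp hf.fderiv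

theorem dirDeriv_comm (hf : AnalyticAt 𝕜 f x) (v w : E) :
    dirDeriv 𝕜 w (dirDeriv 𝕜 v f) x = dirDeriv 𝕜 v (dirDeriv 𝕜 w f) x := by
  have hD : DifferentiableAt 𝕜 (fderiv 𝕜 f) x := hf.fderiv.differentiableAt
  have hsnd (v w : E) : dirDeriv 𝕜 w (dirDeriv 𝕜 v f) x = fderiv 𝕜 (fderiv 𝕜 f) x w v :=
    congrArg (· w) (((ContinuousLinearMap.apply 𝕜 F v).hasFDerivAt.comp x hD.hasFDerivAt).fderiv)
  rw [hsnd, hsnd]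
  exact (hf.contDiffAt (n := ω)).isSymmSndFDerivAt_of_omega w v

theorem iteratedFDeriv_succ_apply_snoc (hf : AnalyticAt 𝕜 f x) {j : ℕ} (m : Fin j → E) (v : E) :
    iteratedFDeriv 𝕜 (j + 1) f x (Fin.snoc m v) = iteratedFDeriv 𝕜 j (dirDeriv 𝕜 v f) x m := by
  rw [iteratedFDeriv_succ_apply_right, Fin.init_snoc, Fin.snoc_last]
  change _ = iteratedFDeriv 𝕜 j (ContinuousLinearMap.apply 𝕜 F v ∘ fderiv 𝕜 f) x m
  rw [ContinuousLinearMap.iteratedFDeriv_comp_left _ hf.fderiv.contDiffAt le_rfl]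
  rfl

theorem iteratedFDeriv_apply_snoc_snoc_comm (hf : AnalyticAt 𝕜 f x) {j : ℕ} (m : Fin j → E)
    (v w : E) :
    iteratedFDeriv 𝕜 (j + 2) f x (Fin.snoc (Fin.snoc m v) w)
      = iteratedFDeriv 𝕜 (j + 2) f x (Fin.snoc (Fin.snoc m w) v) := by
  have hcomm : dirDeriv 𝕜 v (dirDeriv 𝕜 w f) =ᶠ[𝓝 x] dirDeriv 𝕜 w (dirDeriv 𝕜 v f) :=
    hf.eventually_analyticAt.mono fun y hy => dirDeriv_comm hy w v
  rw [iteratedFDeriv_succ_apply_snoc hf, iteratedFDeriv_succ_apply_snoc (hf.dirDeriv w),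
    iteratedFDeriv_succ_apply_snoc hf, iteratedFDeriv_succ_apply_snoc (hf.dirDeriv v),
    (hcomm.iteratedFDeriv 𝕜 j).eq_of_nhds]

theorem iteratedFDeriv_apply_snoc_snoc_snoc_rotate (hf : AnalyticAt 𝕜 f x) {j : ℕ}
    (m : Fin j → E) (u v w : E) :
    iteratedFDeriv 𝕜 (j + 3) f x (Fin.snoc (Fin.snoc (Fin.snoc m u) v) w)
      = iteratedFDeriv 𝕜 (j + 3) f x (Fin.snoc (Fin.snoc (Fin.snoc m w) u) v) := by
  rw [iteratedFDeriv_apply_snoc_snoc_comm hf (Fin.snoc m u) v w, iteratedFDeriv_succ_apply_snoc hf,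
    iteratedFDeriv_apply_snoc_snoc_comm (hf.dirDeriv v), ← iteratedFDeriv_succ_apply_snoc hf]

end DirDeriv

section Ray

variable {E F : Type*} [NormedAddCommGroup E] [NormedSpace ℝ E] [NormedAddCommGroup F]
  [NormedSpace ℝ F] [CompleteSpace F]

theorem iteratedFDeriv_apply_const_eq_zero_of_eventually_eq_zero_on_ray {f : E → F} {x w : E}
    (hf : AnalyticAt ℝ f x) (hz : ∀ᶠ r in 𝓝[>] (0 : ℝ), f (x + r • w) = 0) (j : ℕ) :
    iteratedFDeriv ℝ j f x (fun _ => w) = 0 := by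
  set L : ℝ →L[ℝ] E := ContinuousLinearMap.toSpanSingleton ℝ w
  set g : E → F := fun y => f (x + y)
  have hg : AnalyticAt ℝ g 0 := by
    refine hf.comp_of_eq ?_ (by simp)
    exact analyticAt_const.add analyticAt_id
  obtain ⟨s, hs, hgs⟩ := hg.exists_mem_nhds_analyticOnNhd
  set U := interior s
  have hU : IsOpen U := isOpen_interior
  have hU0 : (0 : E) ∈ U := mem_interior_iff_mem_nhds.2 hs
  have hLU : IsOpen (L ⁻¹' U) := hU.preimage L.continuous
  have hL0 : (0 : ℝ) ∈ L ⁻¹' U := by simpa using hU0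
  -- identity theorem for the restriction `r ↦ f (x + r • w)`
  have hgL : g ∘ L =ᶠ[𝓝 0] 0 := by
    refine ((hg.comp_of_eq (L.analyticAt 0) (by simp)).frequently_zero_iff_eventually_zero).1 ?_
    refine (hz.frequently.filter_mono (nhdsWithin_mono 0 fun t ht => ne_of_gt ht)).mono ?_
    intro r hr
    simpa [g, L] using hr
  have hcomp := L.iteratedFDerivWithin_comp_right
    ((hgs.mono interior_subset).contDiffOn hU.uniqueDiffOn (n := j)) hU.uniqueDiffOn
    hLU.uniqueDiffOn (x := 0) (by rwa [map_zero]) le_rfl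
  rw [iteratedFDerivWithin_of_isOpen j hLU hL0, (hgL.iteratedFDeriv ℝ j).eq_of_nhds,
    iteratedFDeriv_zero, Pi.zero_apply, map_zero, iteratedFDerivWithin_of_isOpen j hU hU0,
    iteratedFDeriv_comp_add_left] at hcomp
  simpa [L] using (congrArg (· fun _ => (1 : ℝ)) hcomp).symm

theorem iteratedFDeriv_snoc_const_eq_zero_of_ray {f : E → F} {x w ν : E}
    (hf : AnalyticAt ℝ f x) {h : ℝ} (hh : 0 < h)
    (hray : ∀ r : ℝ, 0 ≤ r → r ≤ h → fderiv ℝ f (x + r • w) ν = 0) (k : ℕ) :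
    iteratedFDeriv ℝ (k + 1) f x (Fin.snoc (fun _ => w) ν) = 0 := by
  rw [iteratedFDeriv_succ_apply_snoc hf]
  refine iteratedFDeriv_apply_const_eq_zero_of_eventually_eq_zero_on_ray (hf.dirDeriv ν) ?_ k
  filter_upwards [Ioo_mem_nhdsGT hh] with r hr
  exact hray r hr.1.le hr.2.le

end Ray

theorem re_prod_equivRealProd_symm_snoc_rotation (θ : ℝ) (k : ℕ) :
    (∏ i, Complex.equivRealProd.symm
      ((Fin.snoc (fun _ : Fin k => (Real.cos θ, Real.sin θ)) (-Real.sin θ, Real.cos θ) :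
        Fin (k + 1) → ℝ × ℝ) i)).re = -Real.sin ((k + 1) * θ) := by
  have hdir :
      Complex.equivRealProd.symm (Real.cos θ, Real.sin θ) = Complex.exp (θ * Complex.I) := by
    rw [Complex.equivRealProd_symm_apply, Complex.exp_mul_I]
    push_cast
    rfl
  have hnormal : Complex.equivRealProd.symm (-Real.sin θ, Real.cos θ)
      = Complex.I * Complex.exp (θ * Complex.I) := by
    rw [Complex.equivRealProd_symm_apply, Complex.exp_mul_I]
    push_cast
    ring_nf
    rw [Complex.I_sq]
    ring
  rw [Fin.prod_comp_snoc, Finset.prod_const, Finset.card_univ, Fintype.card_fin, hdir, hnormal,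
    ← Complex.exp_nat_mul, mul_left_comm, ← Complex.exp_add, Complex.I_mul_re]
  rw [show (k : ℂ) * (θ * Complex.I) + θ * Complex.I
      = ((((k : ℝ) + 1) * θ : ℝ) : ℂ) * Complex.I by push_cast; ring,
    Complex.exp_ofReal_mul_I_im]

theorem sin_mul_mul_pi_ne_zero {α : ℝ} (hα : α ∈ Ioo (0 : ℝ) 1) {p : ℕ} (hp : 0 < p)
    (hq : ∀ q : ℕ, 1 ≤ q → q ≤ p - 1 → α ≠ q / p) : Real.sin (p * (α * Real.pi)) ≠ 0 := by
  rw [Ne, Real.sin_eq_zero_iff]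
  rintro ⟨q, hq_eq⟩
  have hq_eq' : (q : ℝ) = p * α := by
    have := Real.pi_pos
    apply mul_right_cancel₀ this.ne'
    linarith
  have hp' : (0 : ℝ) < p := by exact_mod_cast hp
  have hq_pos : (0 : ℝ) < q := by rw [hq_eq']; exact mul_pos hp' hα.1
  have hq_lt : (q : ℝ) < p := by rw [hq_eq']; nlinarith [hα.2]
  lift q to ℕ using by exact_mod_cast hq_pos.le
  push_cast at hq_pos hq_lt hq_eq'
  refine hq q ?_ ?_ (by rw [hq_eq']; field_simp)
  · exact_mod_cast hq_pos
  · have : q < p := by exact_mod_cast hq_lt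
    omega

section Helmholtz

/-- `Δf + lam • f = 0` to infinite order at `x`, read off the Taylor coefficients of `f`. -/
def IsHelmholtzJetAt (lam : ℂ) (f : ℝ × ℝ → ℂ) (x : ℝ × ℝ) : Prop :=
  ∀ (j : ℕ) (m : Fin j → ℝ × ℝ),
    iteratedFDeriv ℝ (j + 2) f x (Fin.snoc (Fin.snoc m (1, 0)) (1, 0))
      + iteratedFDeriv ℝ (j + 2) f x (Fin.snoc (Fin.snoc m (0, 1)) (0, 1))
      + lam * iteratedFDeriv ℝ j f x m = 0

variable {lam : ℂ} {f : ℝ × ℝ → ℂ} {x : ℝ × ℝ}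

theorem isHelmholtzJetAt_of_eventually (hf : AnalyticAt ℝ f x)
    (hΔ : ∀ᶠ y in 𝓝 x, pd1 (pd1 f) y + pd2 (pd2 f) y + lam * f y = 0) :
    IsHelmholtzJetAt lam f x := by
  intro j m
  have h₁ : AnalyticAt ℝ (pd1 (pd1 f)) x := (hf.dirDeriv _).dirDeriv _
  have h₂ : AnalyticAt ℝ (pd2 (pd2 f)) x := (hf.dirDeriv _).dirDeriv _
  have hzero : pd1 (pd1 f) + pd2 (pd2 f) + lam • f =ᶠ[𝓝 x] 0 := by
    filter_upwards [hΔ] with y hy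
    simpa using hy
  have hD := congrArg (· m) (hzero.iteratedFDeriv ℝ j).eq_of_nhds
  have h₁₂ : ContDiffAt ℝ j (pd1 (pd1 f) + pd2 (pd2 f)) x := h₁.contDiffAt.add h₂.contDiffAt
  have h₃ : ContDiffAt ℝ j (lam • f) x := hf.contDiffAt.const_smul lam
  rw [iteratedFDeriv_add_apply h₁₂ h₃,
    iteratedFDeriv_add_apply h₁.contDiffAt h₂.contDiffAt,
    iteratedFDeriv_const_smul_apply hf.contDiffAt] at hD
  rw [iteratedFDeriv_succ_apply_snoc hf, iteratedFDeriv_succ_apply_snoc (hf.dirDeriv _),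
    iteratedFDeriv_succ_apply_snoc hf, iteratedFDeriv_succ_apply_snoc (hf.dirDeriv _)]
  simp only [add_apply, smul_apply, smul_eq_mul,
    iteratedFDeriv_zero, Pi.zero_apply, zero_apply] at hD
  exact hD

theorem IsHelmholtzJetAt.dirDeriv (hH : IsHelmholtzJetAt lam f x) (hf : AnalyticAt ℝ f x)
    (v : ℝ × ℝ) : IsHelmholtzJetAt lam (dirDeriv ℝ v f) x := by
  intro j m
  rw [← iteratedFDeriv_succ_apply_snoc hf, ← iteratedFDeriv_succ_apply_snoc hf,
    ← iteratedFDeriv_succ_apply_snoc hf, iteratedFDeriv_apply_snoc_snoc_snoc_rotate hf m (1, 0),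
    iteratedFDeriv_apply_snoc_snoc_snoc_rotate hf m (0, 1)]
  exact hH (j + 1) (Fin.snoc m v)

theorem iteratedFDeriv_apply_eq_of_isHelmholtzJetAt (hH : IsHelmholtzJetAt lam f x)
    (hf : AnalyticAt ℝ f x) {k : ℕ} (hlow : ∀ j ≤ k, iteratedFDeriv ℝ j f x = 0)
    (m : Fin (k + 1) → ℝ × ℝ) :
    iteratedFDeriv ℝ (k + 1) f x m
      = ((∏ i, Complex.equivRealProd.symm (m i)).re : ℂ)
          * iteratedFDeriv ℝ (k + 1) f x (fun _ => (1, 0))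
        + ((∏ i, Complex.equivRealProd.symm (m i)).im : ℂ)
          * iteratedFDeriv ℝ (k + 1) f x (Fin.snoc (fun _ => (1, 0)) (0, 1)) := by
  induction k generalizing f with
  | zero =>
    obtain ⟨m, v, rfl⟩ : ∃ m' v, m = Fin.snoc m' v := ⟨_, _, (Fin.snoc_init_self m).symm⟩
    rw [Fin.prod_comp_snoc, (iteratedFDeriv ℝ 1 f x).map_snoc_eq_fst_smul_add_snd_smul,
      Complex.real_smul, Complex.real_smul, Subsingleton.elim m (fun _ => (1, 0)),
      Fin.snoc_const]
    simp
  | succ k ih =>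
    -- peel off the last argument: `∂₁f` and `∂₂f` satisfy the hypotheses one order lower
    obtain ⟨m, v, rfl⟩ : ∃ m' v, m = Fin.snoc m' v := ⟨_, _, (Fin.snoc_init_self m).symm⟩
    have hlow' (w : ℝ × ℝ) : ∀ j ≤ k, iteratedFDeriv ℝ j (dirDeriv ℝ w f) x = 0 := by
      intro j hj
      ext m
      rw [← iteratedFDeriv_succ_apply_snoc hf, hlow (j + 1) (by omega)]
      rfl
    set P := ∏ i, Complex.equivRealProd.symm (m i)
    have h₁ : iteratedFDeriv ℝ (k + 2) f x (Fin.snoc m (1, 0))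
        = (P.re : ℂ) * iteratedFDeriv ℝ (k + 2) f x (fun _ => (1, 0))
          + (P.im : ℂ) * iteratedFDeriv ℝ (k + 2) f x (Fin.snoc (fun _ => (1, 0)) (0, 1)) := by
      rw [iteratedFDeriv_succ_apply_snoc hf, ih (hH.dirDeriv hf _) (hf.dirDeriv _) (hlow' _),
        ← iteratedFDeriv_succ_apply_snoc hf, ← iteratedFDeriv_succ_apply_snoc hf,
        iteratedFDeriv_apply_snoc_snoc_comm hf, Fin.snoc_const, Fin.snoc_const]
    have h₂ : iteratedFDeriv ℝ (k + 2) f x (Fin.snoc m (0, 1))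
        = (P.re : ℂ) * iteratedFDeriv ℝ (k + 2) f x (Fin.snoc (fun _ => (1, 0)) (0, 1))
          - (P.im : ℂ) * iteratedFDeriv ℝ (k + 2) f x (fun _ => (1, 0)) := by
      have hΔ := hH k (fun _ => (1, 0))
      rw [Fin.snoc_const, Fin.snoc_const, hlow k (by omega), zero_apply, mul_zero, add_zero] at hΔ
      rw [iteratedFDeriv_succ_apply_snoc hf, ih (hH.dirDeriv hf _) (hf.dirDeriv _) (hlow' _),
        ← iteratedFDeriv_succ_apply_snoc hf, ← iteratedFDeriv_succ_apply_snoc hf]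
      linear_combination (P.im : ℂ) * hΔ
    rw [Fin.prod_comp_snoc, (iteratedFDeriv ℝ (k + 2) f x).map_snoc_eq_fst_smul_add_snd_smul,
      Complex.real_smul, Complex.real_smul, h₁, h₂,
      Complex.mul_re, Complex.mul_im]
    rw [show (Complex.equivRealProd.symm v).re = v.1 from rfl,
      show (Complex.equivRealProd.symm v).im = v.2 from rfl]
    push_cast
    ring

theorem iteratedFDeriv_eq_zero_of_isHelmholtzJetAt (hH : IsHelmholtzJetAt lam f x) (hf : AnalyticAt ℝ f x) {k : ℕ}
    (hlow : ∀ j ≤ k, iteratedFDeriv ℝ j f x = 0)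
    (ha₁ : iteratedFDeriv ℝ (k + 1) f x (Fin.snoc (fun _ => (1, 0)) (0, 1)) = 0) {θ : ℝ}
    (hθ : iteratedFDeriv ℝ (k + 1) f x
      (Fin.snoc (fun _ => (Real.cos θ, Real.sin θ)) (-Real.sin θ, Real.cos θ)) = 0)
    (hsin : Real.sin ((k + 1) * θ) ≠ 0) :
    iteratedFDeriv ℝ (k + 1) f x = 0 := by
  have ha₀ : iteratedFDeriv ℝ (k + 1) f x (fun _ => (1, 0)) = 0 := by
    have := iteratedFDeriv_apply_eq_of_isHelmholtzJetAt hH hf hlow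
      (Fin.snoc (fun _ => (Real.cos θ, Real.sin θ)) (-Real.sin θ, Real.cos θ))
    rw [hθ, ha₁, re_prod_equivRealProd_symm_snoc_rotation, mul_zero, add_zero] at this
    exact (mul_eq_zero.1 this.symm).resolve_left (by exact_mod_cast neg_ne_zero.2 hsin)
  ext m
  simpa [ha₀, ha₁] using iteratedFDeriv_apply_eq_of_isHelmholtzJetAt hH hf hlow m

end Helmholtz

theorem stmt5_general
    (Ω : Set (ℝ × ℝ)) (hΩ : IsOpen Ω)
    (lam : ℝ)
    (u : ℝ × ℝ → ℂ)
    (hu_an : AnalyticOnNhd ℝ u Ω)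
    (hu_eq : ∀ x ∈ Ω, pd1 (pd1 u) x + pd2 (pd2 u) x + (lam : ℂ) * u x = 0)
    (α : ℝ) (hα : α ∈ Set.Ioo (0 : ℝ) 1)
    (θ₀ : ℝ) (hθ₀ : θ₀ = α * Real.pi)
    (h : ℝ) (hh : 0 < h)
    (hdisk : ∀ x : ℝ × ℝ, x.1 ^ 2 + x.2 ^ 2 ≤ h ^ 2 → x ∈ Ω)
    (n : ℕ)
    (hsing_m : ∀ r : ℝ, 0 ≤ r → r ≤ h → fderiv ℝ u (r, 0) (0, -1) = 0)
    (hsing_p : ∀ r : ℝ, 0 ≤ r → r ≤ h →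
      fderiv ℝ u (r * Real.cos θ₀, r * Real.sin θ₀) (-Real.sin θ₀, Real.cos θ₀) = 0)
    (hu0 : u (0, 0) = 0)
    (hαpq : ∀ p q : ℕ, 1 ≤ p → p ≤ n - 1 → 1 ≤ q → q ≤ p - 1 → α ≠ (q : ℝ) / (p : ℝ)) :
    ∀ k : ℕ, k < n → iteratedFDeriv ℝ k u (0, 0) = 0 := by
  have h0 : (0 : ℝ × ℝ) ∈ Ω := hdisk 0 (by simp [sq_nonneg])
  have hf : AnalyticAt ℝ u 0 := hu_an 0 h0
  have hH : IsHelmholtzJetAt lam u 0 :=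
    isHelmholtzJetAt_of_eventually hf (eventually_of_mem (hΩ.mem_nhds h0) hu_eq)
  intro k hk
  rw [Prod.mk_zero_zero]
  induction k using Nat.strong_induction_on with
  | _ k ih =>
  cases k with
  | zero => ext m; simpa [Prod.mk_zero_zero] using hu0
  | succ k =>
    have hlow : ∀ j ≤ k, iteratedFDeriv ℝ j u 0 = 0 := fun j hj => ih j (by omega) (by omega)
    have ha₁ : iteratedFDeriv ℝ (k + 1) u 0 (Fin.snoc (fun _ => (1, 0)) (0, 1)) = 0 := by
      refine iteratedFDeriv_snoc_const_eq_zero_of_ray hf hh (fun r hr0 hrh => ?_) k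
      rw [show (0 : ℝ × ℝ) + r • (1, 0) = (r, 0) by simp,
        show ((0 : ℝ), (1 : ℝ)) = -(0, -1) by simp, map_neg, hsing_m r hr0 hrh, neg_zero]
    have hθ : iteratedFDeriv ℝ (k + 1) u 0
        (Fin.snoc (fun _ => (Real.cos θ₀, Real.sin θ₀)) (-Real.sin θ₀, Real.cos θ₀)) = 0 :=
      iteratedFDeriv_snoc_const_eq_zero_of_ray hf hh (by simpa using hsing_p) k
    have hsin : Real.sin ((k + 1) * θ₀) ≠ 0 := by
      have := sin_mul_mul_pi_ne_zero hα (p := k + 1) (by omega)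
        (fun q hq₁ hq₂ => hαpq (k + 1) q (by omega) (by omega) hq₁ hq₂)
      simpa [hθ₀] using this
    exact iteratedFDeriv_eq_zero_of_isHelmholtzJetAt hH hf hlow ha₁ hθ hsin

/-- Two singular lines intersecting at the origin at angle `θ₀ = απ` with the rational-angle
avoidance condition and `u 0 = 0`: the eigenfunction vanishes at `0` up to order `n`. -/
theorem stmt5
    (Ω : Set (ℝ × ℝ)) (hΩ : IsOpen Ω)
    (lam : ℝ) (hlam : 0 < lam)
    (u : ℝ × ℝ → ℂ)
    (hu_an : AnalyticOnNhd ℝ u Ω)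
    (hu_eq : ∀ x ∈ Ω, pd1 (pd1 u) x + pd2 (pd2 u) x + (lam : ℂ) * u x = 0)
    (α : ℝ) (hα : α ∈ Set.Ioo (0 : ℝ) 1)
    (θ₀ : ℝ) (hθ₀ : θ₀ = α * Real.pi)
    (h : ℝ) (hh : 0 < h)
    (hdisk : ∀ x : ℝ × ℝ, x.1 ^ 2 + x.2 ^ 2 ≤ h ^ 2 → x ∈ Ω)
    (n : ℕ) (hn : 3 ≤ n)
    (hsing_m : ∀ r : ℝ, 0 ≤ r → r ≤ h → fderiv ℝ u (r, 0) (0, -1) = 0)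
    (hsing_p : ∀ r : ℝ, 0 ≤ r → r ≤ h →
      fderiv ℝ u (r * Real.cos θ₀, r * Real.sin θ₀) (-Real.sin θ₀, Real.cos θ₀) = 0)
    (hu0 : u (0, 0) = 0)
    (hαpq : ∀ p q : ℕ, 1 ≤ p → p ≤ n - 1 → 1 ≤ q → q ≤ p - 1 → α ≠ (q : ℝ) / (p : ℝ)) :
    ∀ k : ℕ, k < n → iteratedFDeriv ℝ k u (0, 0) = 0 :=
  stmt5_general Ω hΩ lam u hu_an hu_eq α hα θ₀ hθ₀ h hh hdisk n hsing_m hsing_p hu0 hαpq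
end

section
/- Let Ω, λ, u, α, θ₀, h, Γ_h^−, Γ_h^+, ν⁺ be as in the context, and let n ≥ 2 be an integer. Suppose Γ_h^− is a nodal line of u, i.e., u(x) = 0 for all x ∈ Γ_h^−, and Γ_h^+ is a singular line of u, i.e., ∇u(x)·ν⁺ = 0 for all x ∈ Γ_h^+. If α ≠ (2q+1)/(2p) for all integers p, q with 1 ≤ p ≤ n−1 and 0 ≤ q ≤ p−1, then u vanishes at 0 up to order n, i.e., every partial derivative of u of order strictly less than n vanishes at 0. -/
open Filter Set Topology TopologicalSpace Real

lemma Set.indicator_eventuallyEq_self {α β : Type*} [Zero β] {s : Set α} {l : Filter α}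
    (hs : s ∈ l) (f : α → β) : s.indicator f =ᶠ[l] f :=
  eventually_of_mem hs fun _ hy => indicator_of_mem hy f

section DirDeriv

variable {𝕜 E F : Type*} [NontriviallyNormedField 𝕜] [NormedAddCommGroup E] [NormedSpace 𝕜 E]
  [NormedAddCommGroup F] [NormedSpace 𝕜 F]

lemma AnalyticOnNhd.indicator {U : Set E} {f : E → F} (hf : AnalyticOnNhd 𝕜 f U)
    (hU : IsOpen U) : AnalyticOnNhd 𝕜 (U.indicator f) U :=
  fun x hx => (hf x hx).congr (indicator_eventuallyEq_self (hU.mem_nhds hx) f).symm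

variable (𝕜 F) in
def analyticOnNhdSubmodule (U : Set E) : Submodule 𝕜 (E → F) where
  carrier := {f | AnalyticOnNhd 𝕜 f U}
  add_mem' hf hg := hf.add hg
  zero_mem' := analyticOnNhd_const
  smul_mem' _ _ hf := analyticOnNhd_const.smul hf

variable [CompleteSpace F] (U : Opens E)

local notation "𝒜" => analyticOnNhdSubmodule 𝕜 F (U : Set E)

variable (𝕜) in
/-- The derivative in direction `v`, set to zero off `U`: with this normalisation, derivatives in
different directions commute as operators, not only on `U`. -/
noncomputable def dirDerivOn : E →ₗ[𝕜] Module.End 𝕜 𝒜 where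
  toFun v :=
    { toFun f := ⟨(U : Set E).indicator fun x => fderiv 𝕜 (f : E → F) x v,
        ((ContinuousLinearMap.apply 𝕜 F v).comp_analyticOnNhd f.2.fderiv).indicator U.isOpen⟩
      map_add' f g := by
        ext x
        by_cases hx : x ∈ U
        · simp [hx, fderiv_add ((f.2 x hx).differentiableAt) ((g.2 x hx).differentiableAt)]
        · simp [hx]
      map_smul' c f := by
        ext x
        by_cases hx : x ∈ U
        · simp [hx, fderiv_const_smul ((f.2 x hx).differentiableAt)]
        · simp [hx] }
  map_add' v w := by ext f x; by_cases hx : x ∈ U <;> simp [hx]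
  map_smul' c v := by ext f x; by_cases hx : x ∈ U <;> simp [hx]

variable {U}

lemma dirDerivOn_apply_of_mem {x : E} (hx : x ∈ U) (v : E) (f : 𝒜) :
    (dirDerivOn 𝕜 U v f : E → F) x = fderiv 𝕜 (f : E → F) x v :=
  indicator_of_mem (s := (U : Set E)) hx (fun x => fderiv 𝕜 (f : E → F) x v)

lemma dirDerivOn_apply_of_notMem {x : E} (hx : x ∉ U) (v : E) (f : 𝒜) :
    (dirDerivOn 𝕜 U v f : E → F) x = 0 :=
  indicator_of_notMem (s := (U : Set E)) hx (fun x => fderiv 𝕜 (f : E → F) x v)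

lemma dirDerivOn_eventuallyEq {x : E} (hx : x ∈ U) {f : 𝒜} {f₀ : E → F}
    (hf : (f : E → F) =ᶠ[𝓝 x] f₀) (v : E) :
    (dirDerivOn 𝕜 U v f : E → F) =ᶠ[𝓝 x] fun y => fderiv 𝕜 f₀ y v := by
  filter_upwards [hf.eventuallyEq_nhds, U.isOpen.mem_nhds hx] with y hy hyU
  rw [dirDerivOn_apply_of_mem hyU, hy.fderiv_eq]

lemma dirDerivOn_apply_eq_zero_of_fderiv_eq_zero {f : 𝒜} {u : E → F}
    (hf : (f : E → F) = (U : Set E).indicator u) {x v : E} (hu : fderiv 𝕜 u x v = 0) :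
    (dirDerivOn 𝕜 U v f : E → F) x = 0 := by
  by_cases hx : x ∈ U
  · have hfu := hf ▸ indicator_eventuallyEq_self (U.isOpen.mem_nhds hx) u
    exact (dirDerivOn_eventuallyEq hx hfu v).eq_of_nhds.trans hu
  · exact dirDerivOn_apply_of_notMem hx v f

lemma dirDerivOn_dirDerivOn_apply {x : E} (hx : x ∈ U) (v w : E) (f : 𝒜) :
    (dirDerivOn 𝕜 U v (dirDerivOn 𝕜 U w f) : E → F) x
      = fderiv 𝕜 (fderiv 𝕜 (f : E → F)) x v w := by
  rw [dirDerivOn_apply_of_mem hx,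
    (dirDerivOn_eventuallyEq hx (EventuallyEq.refl _ _) w).fderiv_eq,
    fderiv_clm_apply (f.2.fderiv x hx).differentiableAt (differentiableAt_const w)]
  simp

lemma commute_dirDerivOn (v w : E) :
    Commute (dirDerivOn 𝕜 U v) (dirDerivOn 𝕜 U w : Module.End 𝕜 𝒜) := by
  ext f x
  by_cases hx : x ∈ U
  · simp only [Module.End.mul_apply, dirDerivOn_dirDerivOn_apply hx]
    exact ((f.2 x hx).contDiffAt.isSymmSndFDerivAt_of_omega).eq v w
  · simp only [Module.End.mul_apply, dirDerivOn_apply_of_notMem hx]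

lemma iteratedFDeriv_apply_eq_list_prod_dirDerivOn {x : E} (hx : x ∈ U) (f : 𝒜) {k : ℕ}
    (m : Fin k → E) :
    iteratedFDeriv 𝕜 k f x m = ((List.ofFn fun i => dirDerivOn 𝕜 U (m i)).prod f : E → F) x := by
  induction k generalizing x with
  | zero => simp
  | succ k ih =>
    have hP : (fun y => iteratedFDeriv 𝕜 k f y (Fin.tail m)) =ᶠ[𝓝 x]
        ((List.ofFn fun i => dirDerivOn 𝕜 U (m i.succ)).prod f : E → F) := by
      filter_upwards [U.isOpen.mem_nhds hx] with y hy using ih hy _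
    rw [iteratedFDeriv_succ_apply_left, List.ofFn_succ, List.prod_cons, Module.End.mul_apply,
      dirDerivOn_apply_of_mem hx, ← hP.fderiv_eq,
      fderiv_continuousMultilinear_apply_const_apply (f.2.iteratedFDeriv k x hx).differentiableAt]

end DirDeriv

section Segment

variable {E F : Type*} [NormedAddCommGroup E] [NormedSpace ℝ E] [NormedAddCommGroup F]
  [NormedSpace ℝ F] [CompleteSpace F] {U : Opens E} {g : analyticOnNhdSubmodule ℝ F (U : Set E)}
  {d : E} {h : ℝ}

lemma dirDerivOn_apply_smul_eq_zero (hg : ∀ r ∈ Ioo 0 h, (g : E → F) (r • d) = 0) {r : ℝ}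
    (hr : r ∈ Ioo 0 h) : (dirDerivOn ℝ U d g : E → F) (r • d) = 0 := by
  by_cases hU : r • d ∈ U
  · have hcurve : HasDerivAt (fun s : ℝ => s • d) d r := by
      simpa using (hasDerivAt_id r).smul_const d
    have hcomp : HasDerivAt (fun s : ℝ => (g : E → F) (s • d)) (fderiv ℝ g (r • d) d) r :=
      (g.2 _ hU).differentiableAt.hasFDerivAt.comp_hasDerivAt r hcurve
    have hzero : (fun s : ℝ => (g : E → F) (s • d)) =ᶠ[𝓝 r] fun _ => 0 :=
      eventually_of_mem (Ioo_mem_nhds hr.1 hr.2) hg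
    rw [dirDerivOn_apply_of_mem hU, ← hcomp.deriv, hzero.deriv_eq, deriv_const]
  · exact dirDerivOn_apply_of_notMem hU d g

lemma pow_dirDerivOn_apply_smul_eq_zero (hg : ∀ r ∈ Ioo 0 h, (g : E → F) (r • d) = 0)
    (i : ℕ) : ∀ r ∈ Ioo 0 h, ((dirDerivOn ℝ U d ^ i) g : E → F) (r • d) = 0 := by
  induction i with
  | zero => exact hg
  | succ i ih =>
    intro r hr
    rw [pow_succ']
    exact dirDerivOn_apply_smul_eq_zero ih hr

lemma pow_dirDerivOn_apply_zero_eq_zero (hh : 0 < h) (h0 : (0 : E) ∈ U)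
    (hg : ∀ r ∈ Ioo 0 h, (g : E → F) (r • d) = 0) (i : ℕ) :
    ((dirDerivOn ℝ U d ^ i) g : E → F) 0 = 0 := by
  set g' := (dirDerivOn ℝ U d ^ i) g
  have hcont : ContinuousAt (fun s : ℝ => (g' : E → F) (s • d)) 0 :=
    ContinuousAt.comp (by simpa using (g'.2 0 h0).continuousAt)
      (continuous_id.smul continuous_const).continuousAt
  have hzero : Tendsto (fun s : ℝ => (g' : E → F) (s • d)) (𝓝[>] 0) (𝓝 0) :=
    tendsto_const_nhds.congr' <| eventually_of_mem (Ioo_mem_nhdsGT hh) fun r hr =>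
      (pow_dirDerivOn_apply_smul_eq_zero hg i r hr).symm
  simpa using tendsto_nhds_unique (hcont.tendsto.mono_left nhdsWithin_le_nhds) hzero

end Segment

section Algebra

lemma sum_choose_mul_im_I_pow_eq_cos (θ : ℝ) (l : ℕ) :
    ∑ m ∈ Finset.range (l + 1), l.choose m * sin θ ^ m * cos θ ^ (l - m) *
      (cos θ * (Complex.I ^ (m + 1)).im - sin θ * (Complex.I ^ m).im) = cos ((l + 1) * θ) := by
  have hexp : (cos θ : ℂ) + sin θ * Complex.I = Complex.exp (θ * Complex.I) := by
    rw [Complex.exp_mul_I, ← Complex.ofReal_cos, ← Complex.ofReal_sin]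
  have hdeMoivre : cos ((l + 1) * θ)
      = ((sin θ * Complex.I + cos θ) ^ l * (cos θ + sin θ * Complex.I)).re := by
    rw [add_comm (_ * Complex.I), ← pow_succ, hexp, ← Complex.exp_nat_mul,
      ← Complex.exp_ofReal_mul_I_re]
    push_cast
    ring_nf
  rw [hdeMoivre, add_pow, Finset.sum_mul, Complex.re_sum]
  refine Finset.sum_congr rfl fun m _ => ?_
  rw [show ((sin θ : ℂ) * Complex.I) ^ m * (cos θ : ℂ) ^ (l - m) * (l.choose m : ℂ)
      * (cos θ + sin θ * Complex.I) = ((l.choose m * sin θ ^ m * cos θ ^ (l - m) : ℝ) : ℂ)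
      * (Complex.I ^ m * (cos θ + sin θ * Complex.I)) by push_cast; ring, Complex.re_ofReal_mul]
  simp only [pow_succ, Complex.mul_re, Complex.add_re, Complex.add_im, Complex.ofReal_re,
    Complex.ofReal_im, Complex.mul_im, Complex.I_re, Complex.I_im]
  ring

variable {M : Type*} [AddCommGroup M] [Module ℝ M]

lemma eq_im_I_pow_smul_of_add_two_eq_neg {t : ℕ → M} {k : ℕ} (h0 : t 0 = 0)
    (hrec : ∀ m, m + 2 ≤ k → t (m + 2) = -t m) : ∀ m ≤ k, t m = (Complex.I ^ m).im • t 1 := by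
  intro m
  induction m using Nat.twoStepInduction with
  | zero => simp [h0]
  | one => simp
  | more m ih _ =>
    intro hm
    rw [hrec m hm, ih (by omega), pow_add, Complex.I_sq]
    simp

lemma sum_choose_smul_eq_cos_smul {t : ℕ → M} (θ : ℝ) {l : ℕ} (h0 : t 0 = 0)
    (hrec : ∀ m, m + 2 ≤ l + 1 → t (m + 2) = -t m) :
    ∑ m ∈ Finset.range (l + 1), (l.choose m * sin θ ^ m * cos θ ^ (l - m)) •
      (cos θ • t (m + 1) - sin θ • t m) = cos ((l + 1) * θ) • t 1 := by
  rw [← sum_choose_mul_im_I_pow_eq_cos, Finset.sum_smul]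
  refine Finset.sum_congr rfl fun m hm => ?_
  have hml := Finset.mem_range.1 hm
  rw [eq_im_I_pow_smul_of_add_two_eq_neg h0 hrec m (by omega),
    eq_im_I_pow_smul_of_add_two_eq_neg h0 hrec (m + 1) (by omega)]
  module

variable {R : Type*} [Ring R] [Algebra ℝ R] {A B : R}

lemma Commute.pow_mul_pow_mul_sq_add_sq_add_algebraMap (hAB : Commute A B) (lam : ℝ)
    (i j : ℕ) : B ^ j * A ^ i * (A ^ 2 + B ^ 2 + algebraMap ℝ R lam)
      = B ^ j * A ^ (i + 2) + B ^ (j + 2) * A ^ i + lam • (B ^ j * A ^ i) := by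
  rw [mul_add, mul_add, mul_assoc, ← pow_add, mul_assoc, (hAB.pow_pow i 2).eq, ← mul_assoc,
    ← pow_add, ← Algebra.commutes, ← Algebra.smul_def]

/-- The exponent `l + 1 - (m + 1)` rather than `l - m` makes both terms read
`B ^ j * A ^ (l + 1 - j)`. -/
lemma Commute.smul_add_smul_pow_mul (hAB : Commute A B) (c s : ℝ) (l : ℕ) :
    (c • A + s • B) ^ l * (-s • A + c • B)
      = ∑ m ∈ Finset.range (l + 1), (l.choose m * s ^ m * c ^ (l - m)) •
          (c • (B ^ (m + 1) * A ^ (l + 1 - (m + 1))) - s • (B ^ m * A ^ (l + 1 - m))) := by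
  rw [add_comm (c • A), ((hAB.symm.smul_left s).smul_right c).add_pow, Finset.sum_mul]
  refine Finset.sum_congr rfl fun m hm => ?_
  have hml : l + 1 - m = l - m + 1 := by have := Finset.mem_range.1 hm; omega
  have hXA : B ^ m * A ^ (l - m) * A = B ^ m * A ^ (l - m + 1) := by rw [mul_assoc, ← pow_succ]
  have hXB : B ^ m * A ^ (l - m) * B = B ^ (m + 1) * A ^ (l - m) := by
    rw [mul_assoc, (hAB.pow_left _).eq, ← mul_assoc, ← pow_succ]
  rw [Nat.add_sub_add_right, hml, smul_pow, smul_pow, smul_mul_smul_comm, ← nsmul_eq_mul',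
    ← Nat.cast_smul_eq_nsmul ℝ, smul_smul, smul_mul_assoc, mul_add, mul_smul_comm,
    mul_smul_comm, hXA, hXB]
  module

theorem Commute.map_pow_mul_pow_eq_zero (hAB : Commute A B) (φ : R →ₗ[ℝ] M) {lam θ : ℝ}
    {n : ℕ} (hpde : ∀ P, φ (P * (A ^ 2 + B ^ 2 + algebraMap ℝ R lam)) = 0)
    (hnodal : ∀ i, φ (A ^ i) = 0)
    (hsing : ∀ i, φ ((cos θ • A + sin θ • B) ^ i * (-sin θ • A + cos θ • B)) = 0)
    (hcos : ∀ k : ℕ, 0 < k → k < n → cos (k * θ) ≠ 0) :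
    ∀ k < n, ∀ j ≤ k, φ (B ^ j * A ^ (k - j)) = 0 := by
  intro k
  induction k using Nat.strong_induction_on with
  | _ k ih =>
  intro hk
  set t : ℕ → M := fun j => φ (B ^ j * A ^ (k - j))
  have h0 : t 0 = 0 := by simpa [t] using hnodal k
  have hrec : ∀ m, m + 2 ≤ k → t (m + 2) = -t m := by
    intro m hm
    have hlower : φ (B ^ m * A ^ (k - (m + 2))) = 0 :=
      (show k - 2 - m = k - (m + 2) by omega) ▸ ih (k - 2) (by omega) (by omega) m (by omega)
    have hpde_m := hpde (B ^ m * A ^ (k - (m + 2)))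
    rw [hAB.pow_mul_pow_mul_sq_add_sq_add_algebraMap, map_add, map_add, map_smul, hlower,
      smul_zero, add_zero, show k - (m + 2) + 2 = k - m by omega] at hpde_m
    exact eq_neg_of_add_eq_zero_right hpde_m
  obtain _ | l := k
  · intro j hj
    simpa [t, Nat.le_zero.1 hj] using h0
  have hsum := hsing l
  rw [hAB.smul_add_smul_pow_mul, map_sum] at hsum
  simp only [map_smul, map_sub] at hsum
  have hcos_smul : cos ((l + 1) * θ) • t 1 = 0 :=
    (sum_choose_smul_eq_cos_smul θ h0 hrec).symm.trans hsum
  have ht1 : t 1 = 0 :=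
    (smul_eq_zero.1 hcos_smul).resolve_left (by exact_mod_cast hcos (l + 1) l.succ_pos hk)
  intro j hj
  exact (eq_im_I_pow_smul_of_add_two_eq_neg h0 hrec j hj).trans (by rw [ht1, smul_zero])

end Algebra

lemma Commute.list_prod_ofFn_eq_pow_mul_pow {N : Type*} [Monoid N] {a : Fin 2 → N}
    (ha : Commute (a 0) (a 1)) {k : ℕ} (v : Fin k → Fin 2) :
    ∃ j ≤ k, (List.ofFn fun s => a (v s)).prod = a 1 ^ j * a 0 ^ (k - j) := by
  induction k with
  | zero => exact ⟨0, le_rfl, by simp⟩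
  | succ k ih =>
    obtain ⟨j, hj, hprod⟩ := ih fun s => v s.succ
    rw [List.ofFn_succ, List.prod_cons, hprod]
    match v 0 with
    | 0 =>
      refine ⟨j, by omega, ?_⟩
      rw [← mul_assoc, (ha.pow_right j).eq, mul_assoc, ← pow_succ',
        show k + 1 - j = k - j + 1 by omega]
    | 1 => exact ⟨j + 1, by omega, by rw [← mul_assoc, ← pow_succ', Nat.add_sub_add_right]⟩

lemma cos_mul_ne_zero_of_ne_odd_div {α : ℝ} (hα : α ∈ Ioo 0 1) {k : ℕ} (hk : 0 < k)
    (hαk : ∀ q : ℕ, q ≤ k - 1 → α ≠ (2 * q + 1) / (2 * k)) : cos (k * (α * π)) ≠ 0 := by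
  intro hcos
  obtain ⟨m, hm⟩ := Real.cos_eq_zero_iff.1 hcos
  have hkα : 2 * k * α = 2 * m + 1 :=
    mul_right_cancel₀ pi_ne_zero (by linear_combination 2 * hm)
  have hk' : (0 : ℝ) < k := by exact_mod_cast hk
  have hm0 : 0 ≤ m := by
    have : (-1 : ℝ) < m := by nlinarith [hα.1]
    have : (-1 : ℤ) < m := by exact_mod_cast this
    omega
  lift m to ℕ using hm0
  push_cast at hkα
  have hmk : m < k := by
    have : (m : ℝ) < k := by nlinarith [mul_lt_mul_of_pos_left hα.2 hk']
    exact_mod_cast this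
  exact hαk m (by omega) (by field_simp; linarith)

section Plane

variable {F : Type*} [NormedAddCommGroup F] [NormedSpace ℝ F] [CompleteSpace F]
  {U : Opens (ℝ × ℝ)}

local notation "∂₁" => dirDerivOn ℝ (F := F) U ((1, 0) : ℝ × ℝ)
local notation "∂₂" => dirDerivOn ℝ (F := F) U ((0, 1) : ℝ × ℝ)
local notation "𝒜" => analyticOnNhdSubmodule ℝ F (U : Set (ℝ × ℝ))

lemma dirDerivOn_mk (a b : ℝ) : dirDerivOn ℝ U (a, b) = a • ∂₁ + b • ∂₂ := by
  rw [← map_smul, ← map_smul, ← map_add]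
  simp

lemma iteratedFDeriv_eq_zero_of_forall_pow_mul_pow {g : 𝒜} (h0 : 0 ∈ U) {k : ℕ}
    (hg : ∀ j ≤ k, ((∂₂ ^ j * ∂₁ ^ (k - j)) g : ℝ × ℝ → F) 0 = 0) :
    iteratedFDeriv ℝ k (g : ℝ × ℝ → F) 0 = 0 := by
  let e := Module.Basis.finTwoProd ℝ
  have hcomm : Commute (dirDerivOn ℝ (F := F) U (e 0)) (dirDerivOn ℝ U (e 1)) :=
    commute_dirDerivOn _ _
  suffices (iteratedFDeriv ℝ k (g : ℝ × ℝ → F) 0).toMultilinearMap = 0 from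
    ContinuousMultilinearMap.toMultilinearMap_injective this
  refine Module.Basis.ext_multilinear (fun _ => e) fun v => ?_
  obtain ⟨j, hj, hprod⟩ :=
    hcomm.list_prod_ofFn_eq_pow_mul_pow (a := fun t => dirDerivOn ℝ U (e t)) v
  simp only [ContinuousMultilinearMap.coe_coe, iteratedFDeriv_apply_eq_list_prod_dirDerivOn h0,
    hprod]
  simpa [e] using hg j hj

lemma dirDerivOn_sq_add_sq_add_algebraMap_apply_eq_zero {u : ℝ × ℝ → F} {g : 𝒜}
    (hg : (g : ℝ × ℝ → F) = (U : Set (ℝ × ℝ)).indicator u) {lam : ℝ}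
    (hu : ∀ x ∈ U, fderiv ℝ (fun y => fderiv ℝ u y (1, 0)) x (1, 0)
      + fderiv ℝ (fun y => fderiv ℝ u y (0, 1)) x (0, 1) + lam • u x = 0) :
    (∂₁ ^ 2 + ∂₂ ^ 2 + algebraMap ℝ (Module.End ℝ 𝒜) lam) g = 0 := by
  ext x
  by_cases hx : x ∈ U
  · have hgu := hg ▸ indicator_eventuallyEq_self (U.isOpen.mem_nhds hx) u
    have h₁ := dirDerivOn_eventuallyEq hx (dirDerivOn_eventuallyEq hx hgu (1, 0)) (1, 0)
    have h₂ := dirDerivOn_eventuallyEq hx (dirDerivOn_eventuallyEq hx hgu (0, 1)) (0, 1)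
    simp only [LinearMap.add_apply, pow_two, Module.End.mul_apply, Module.algebraMap_end_apply,
      Submodule.coe_add, Submodule.coe_smul, Pi.add_apply, Pi.smul_apply, h₁.eq_of_nhds,
      h₂.eq_of_nhds, hgu.eq_of_nhds]
    exact hu x hx
  · simp [pow_two, dirDerivOn_apply_of_notMem hx, hg, hx]

theorem iteratedFDeriv_eq_zero_of_nodal_of_singular {g : 𝒜} (h0 : 0 ∈ U) {lam θ : ℝ} {n : ℕ}
    (hpde : (∂₁ ^ 2 + ∂₂ ^ 2 + algebraMap ℝ (Module.End ℝ 𝒜) lam) g = 0)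
    (hnodal : ∀ i, ((∂₁ ^ i) g : ℝ × ℝ → F) 0 = 0)
    (hsing : ∀ i, ((dirDerivOn ℝ U (cos θ, sin θ) ^ i) (dirDerivOn ℝ U (-sin θ, cos θ) g)
      : ℝ × ℝ → F) 0 = 0)
    (hcos : ∀ k : ℕ, 0 < k → k < n → cos (k * θ) ≠ 0) :
    ∀ k < n, iteratedFDeriv ℝ k (g : ℝ × ℝ → F) 0 = 0 := by
  let φ : Module.End ℝ 𝒜 →ₗ[ℝ] F :=
    { toFun P := (P g : ℝ × ℝ → F) 0, map_add' _ _ := rfl, map_smul' _ _ := rfl }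
  rw [dirDerivOn_mk (cos θ), dirDerivOn_mk (-sin θ)] at hsing
  have hφ := Commute.map_pow_mul_pow_eq_zero (R := Module.End ℝ 𝒜) (commute_dirDerivOn _ _) φ
    (fun P => show ((P * _) g : ℝ × ℝ → F) 0 = 0 by rw [Module.End.mul_apply, hpde, map_zero]; rfl)
    hnodal hsing hcos
  exact fun k hk => iteratedFDeriv_eq_zero_of_forall_pow_mul_pow h0 (hφ k hk)

end Plane

theorem stmt8_general
    (Ω : Set (ℝ × ℝ)) (hΩ : IsOpen Ω)
    (lam : ℝ)
    (u : ℝ × ℝ → ℂ)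
    (hu_an : AnalyticOnNhd ℝ u Ω)
    (hu_eq : ∀ x ∈ Ω, pd1 (pd1 u) x + pd2 (pd2 u) x + (lam : ℂ) * u x = 0)
    (α : ℝ) (hα : α ∈ Set.Ioo (0 : ℝ) 1)
    (θ₀ : ℝ) (hθ₀ : θ₀ = α * Real.pi)
    (h : ℝ) (hh : 0 < h)
    (hdisk : ∀ x : ℝ × ℝ, x.1 ^ 2 + x.2 ^ 2 ≤ h ^ 2 → x ∈ Ω)
    (n : ℕ)
    (hnodal_m : ∀ r : ℝ, 0 ≤ r → r ≤ h → u (r, 0) = 0)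
    (hsing_p : ∀ r : ℝ, 0 ≤ r → r ≤ h →
      fderiv ℝ u (r * Real.cos θ₀, r * Real.sin θ₀) (-Real.sin θ₀, Real.cos θ₀) = 0)
    (hαpq : ∀ p q : ℕ, 1 ≤ p → p ≤ n - 1 → q ≤ p - 1 →
      α ≠ (2 * (q : ℝ) + 1) / (2 * (p : ℝ))) :
    ∀ k : ℕ, k < n → iteratedFDeriv ℝ k u (0, 0) = 0 := by
  intro k hk
  let U : Opens (ℝ × ℝ) := ⟨Ω, hΩ⟩
  have h0 : (0 : ℝ × ℝ) ∈ U := hdisk 0 (by simpa using sq_nonneg h)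
  let g : analyticOnNhdSubmodule ℝ ℂ (U : Set (ℝ × ℝ)) := ⟨Ω.indicator u, hu_an.indicator hΩ⟩
  have hpde := dirDerivOn_sq_add_sq_add_algebraMap_apply_eq_zero (g := g) rfl fun x hx => by
    rw [Complex.real_smul]
    exact hu_eq x hx
  have hnodal : ∀ i, ((dirDerivOn ℝ U (1, 0) ^ i) g : ℝ × ℝ → ℂ) 0 = 0 :=
    pow_dirDerivOn_apply_zero_eq_zero hh h0 fun r hr => by simp [g, hnodal_m r hr.1.le hr.2.le]
  have hsing : ∀ i, ((dirDerivOn ℝ U (cos θ₀, sin θ₀) ^ i)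
      (dirDerivOn ℝ U (-sin θ₀, cos θ₀) g) : ℝ × ℝ → ℂ) 0 = 0 :=
    pow_dirDerivOn_apply_zero_eq_zero hh h0 fun r hr =>
      dirDerivOn_apply_eq_zero_of_fderiv_eq_zero rfl (by simpa using hsing_p r hr.1.le hr.2.le)
  have hcos : ∀ k : ℕ, 0 < k → k < n → cos (k * θ₀) ≠ 0 := fun k hk0 hkn =>
    hθ₀ ▸ cos_mul_ne_zero_of_ne_odd_div hα hk0 fun q hq => hαpq k q hk0 (by omega) hq
  rw [Prod.mk_zero_zero,
    ← ((indicator_eventuallyEq_self (hΩ.mem_nhds h0) u).iteratedFDeriv ℝ k).eq_of_nhds]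
  exact iteratedFDeriv_eq_zero_of_nodal_of_singular h0 hpde hnodal hsing hcos k hk

/-- A nodal line `Γ_h^−` and a singular line `Γ_h^+` intersecting at the origin at angle
`θ₀ = απ`, with `α ≠ (2q+1)/(2p)`: the eigenfunction vanishes at `0` up to order `n`. -/
theorem stmt8
    (Ω : Set (ℝ × ℝ)) (hΩ : IsOpen Ω)
    (lam : ℝ) (hlam : 0 < lam)
    (u : ℝ × ℝ → ℂ)
    (hu_an : AnalyticOnNhd ℝ u Ω)
    (hu_eq : ∀ x ∈ Ω, pd1 (pd1 u) x + pd2 (pd2 u) x + (lam : ℂ) * u x = 0)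
    (α : ℝ) (hα : α ∈ Set.Ioo (0 : ℝ) 1)
    (θ₀ : ℝ) (hθ₀ : θ₀ = α * Real.pi)
    (h : ℝ) (hh : 0 < h)
    (hdisk : ∀ x : ℝ × ℝ, x.1 ^ 2 + x.2 ^ 2 ≤ h ^ 2 → x ∈ Ω)
    (n : ℕ) (hn : 2 ≤ n)
    (hnodal_m : ∀ r : ℝ, 0 ≤ r → r ≤ h → u (r, 0) = 0)
    (hsing_p : ∀ r : ℝ, 0 ≤ r → r ≤ h →
      fderiv ℝ u (r * Real.cos θ₀, r * Real.sin θ₀) (-Real.sin θ₀, Real.cos θ₀) = 0)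
    (hαpq : ∀ p q : ℕ, 1 ≤ p → p ≤ n - 1 → q ≤ p - 1 →
      α ≠ (2 * (q : ℝ) + 1) / (2 * (p : ℝ))) :
    ∀ k : ℕ, k < n → iteratedFDeriv ℝ k u (0, 0) = 0 :=
  stmt8_general Ω hΩ lam u hu_an hu_eq α hα θ₀ hθ₀ h hh hdisk n hnodal_m hsing_p hαpq
end
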